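/- arXiv:2005.04476 — 6 statements merged into one kernel-verified Lean document; each statement's English description precedes it below -/
import Mathlib

section
/- There exists a constant C > 0, depending only on a₀ and C_B, such that for every ε > 0, every real m ≥ 0, every real θ ≥ 1, and all u, v, z ∈ V with |u| ≤ m + 1: |⟨B(u,v),z⟩| ≤ C ε⁻³ (m+1)² |z|² ‖u‖² + 2ε ‖v − u‖² + 2ε ‖u‖² θ² + ε ‖z‖². -/
/-!
Bound `|B(u,v,z)|` by `K ‖v‖` with `K = C_B |u|_Q |z|_Q`. Young's inequality splits this into
`K² / 4ε + ε ‖v‖²`, and `‖v‖² ≤ 2‖v - u‖² + 2‖u‖²`. The interpolation inequality for `Q`,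
together with `|u| ≤ m + 1`, gives `K² ≤ P ‖z‖` with `P = C_B² a₀² (m+1) ‖u‖ |z|`, and a second
application of Young's inequality to `(P / 4ε) ‖z‖` produces the term `P² / 64ε³ + ε ‖z‖²`.
-/

lemma mul_le_sq_div_add_mul_sq (p q : ℝ) {δ : ℝ} (hδ : 0 < δ) :
    p * q ≤ p ^ 2 / (4 * δ) + δ * q ^ 2 := by
  have h := two_mul_le_add_mul_sq (a := q) (b := p) (by positivity : 0 < 2 * δ)
  rw [div_eq_inv_mul, show (4 * δ)⁻¹ = (2 * δ)⁻¹ / 2 by field_simp; ring]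
  linarith

lemma abs_le_sq_div_add_norm_sub_sq {V : Type*} [SeminormedAddCommGroup V] {b K ε : ℝ}
    (hε : 0 < ε) (u v : V) (hb : |b| ≤ K * ‖v‖) :
    |b| ≤ K ^ 2 / (4 * ε) + 2 * ε * ‖v - u‖ ^ 2 + 2 * ε * ‖u‖ ^ 2 := by
  have hv : ‖v‖ ^ 2 ≤ 2 * (‖v - u‖ ^ 2 + ‖u‖ ^ 2) := calc
    ‖v‖ ^ 2 ≤ (‖v - u‖ + ‖u‖) ^ 2 := by gcongr; exact norm_le_norm_sub_add v u
    _ ≤ 2 * (‖v - u‖ ^ 2 + ‖u‖ ^ 2) := add_sq_le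
  nlinarith [mul_le_sq_div_add_mul_sq K ‖v‖ hε]

lemma sq_mul_mul_div_le {a c ε M h p q x y : ℝ} (hε : 0 < ε)
    (hx : x ^ 2 ≤ a * M * p) (hy : y ^ 2 ≤ a * h * q) :
    (c * x * y) ^ 2 / (4 * ε) ≤
      c ^ 4 * a ^ 4 / 64 * (ε ^ 3)⁻¹ * M ^ 2 * h ^ 2 * p ^ 2 + ε * q ^ 2 := by
  set P := c ^ 2 * a ^ 2 * M * p * h
  have hxy : (c * x * y) ^ 2 ≤ P * q := calc
    (c * x * y) ^ 2 = c ^ 2 * (x ^ 2 * y ^ 2) := by ring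
    _ ≤ c ^ 2 * ((a * M * p) * (a * h * q)) :=
      mul_le_mul_of_nonneg_left (mul_le_mul hx hy (sq_nonneg y) ((sq_nonneg x).trans hx))
        (sq_nonneg c)
    _ = P * q := by ring
  calc (c * x * y) ^ 2 / (4 * ε) ≤ P / (4 * ε) * q := by
        rw [div_mul_eq_mul_div]; gcongr
    _ ≤ (P / (4 * ε)) ^ 2 / (4 * ε) + ε * q ^ 2 := mul_le_sq_div_add_mul_sq _ _ hε
    _ = c ^ 4 * a ^ 4 / 64 * (ε ^ 3)⁻¹ * M ^ 2 * h ^ 2 * p ^ 2 + ε * q ^ 2 := by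
        simp only [P]; field_simp; ring

theorem stmt6_general
    {H V Q : Type*}
    [NormedAddCommGroup H] [InnerProductSpace ℝ H]
    [NormedAddCommGroup V] [InnerProductSpace ℝ V]
    [NormedAddCommGroup Q] [NormedSpace ℝ Q]
    (jH : V →L[ℝ] H)
    (jQ : V →L[ℝ] Q)
    (a₀ : ℝ) (ha₀ : 0 < a₀)
    (hQnorm : ∀ v : V, ‖jQ v‖ ^ 2 ≤ a₀ * ‖jH v‖ * ‖v‖)
    (B : V →L[ℝ] V →L[ℝ] V →L[ℝ] ℝ)
    (C_B : ℝ) (hC_B : 0 < C_B)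
    (hB : ∀ u v w : V, |B u v w| ≤ C_B * ‖jQ u‖ * ‖v‖ * ‖jQ w‖) :
    ∃ C : ℝ, 0 < C ∧ ∀ ε : ℝ, 0 < ε → ∀ m θ : ℝ, 0 ≤ m → 1 ≤ θ →
      ∀ u v z : V, ‖jH u‖ ≤ m + 1 →
      |B u v z| ≤ C * ε ^ (-(3:ℝ)) * (m + 1) ^ 2 * ‖jH z‖ ^ 2 * ‖u‖ ^ 2
        + 2 * ε * ‖v - u‖ ^ 2 + 2 * ε * ‖u‖ ^ 2 * θ ^ 2 + ε * ‖z‖ ^ 2 := by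
  refine ⟨C_B ^ 4 * a₀ ^ 4 / 64, by positivity, fun ε hε m θ _ hθ u v z hu => ?_⟩
  have hQu : ‖jQ u‖ ^ 2 ≤ a₀ * (m + 1) * ‖u‖ := (hQnorm u).trans (by gcongr)
  have hBuvz := abs_le_sq_div_add_norm_sub_sq hε u v
    ((hB u v z).trans_eq (by ring : _ = C_B * ‖jQ u‖ * ‖jQ z‖ * ‖v‖))
  have hK := sq_mul_mul_div_le (c := C_B) hε hQu (hQnorm z)
  have hθu : 2 * ε * ‖u‖ ^ 2 ≤ 2 * ε * ‖u‖ ^ 2 * θ ^ 2 :=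
    le_mul_of_one_le_right (by positivity) (one_le_pow₀ hθ)
  rw [Real.rpow_neg hε.le, Real.rpow_ofNat]
  linarith

/-- There exists a constant `C > 0`, depending only on `a₀` and `C_B`,
such that for every `ε > 0`, every real `m ≥ 0`, every real `θ ≥ 1`, and all
`u, v, z ∈ V` with `|u| ≤ m + 1`:
`|⟨B(u,v),z⟩| ≤ C ε⁻³ (m+1)² |z|² ‖u‖² + 2ε ‖v − u‖² + 2ε ‖u‖² θ² + ε ‖z‖²`. -/
theorem stmt6
    {H V Q : Type*}
    [NormedAddCommGroup H] [InnerProductSpace ℝ H] [TopologicalSpace.SeparableSpace H]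
    [NormedAddCommGroup V] [InnerProductSpace ℝ V] [TopologicalSpace.SeparableSpace V]
    [NormedAddCommGroup Q] [NormedSpace ℝ Q]
    (jH : V →L[ℝ] H) (hjH : Function.Injective jH)
    (jQ : V →L[ℝ] Q) (hjQ : Function.Injective jQ)
    (a₀ : ℝ) (ha₀ : 0 < a₀)
    (hQnorm : ∀ v : V, ‖jQ v‖ ^ 2 ≤ a₀ * ‖jH v‖ * ‖v‖)
    (B : V →L[ℝ] V →L[ℝ] V →L[ℝ] ℝ)
    (C_B : ℝ) (hC_B : 0 < C_B)
    (hB : ∀ u v w : V, |B u v w| ≤ C_B * ‖jQ u‖ * ‖v‖ * ‖jQ w‖) :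
    ∃ C : ℝ, 0 < C ∧ ∀ ε : ℝ, 0 < ε → ∀ m θ : ℝ, 0 ≤ m → 1 ≤ θ →
      ∀ u v z : V, ‖jH u‖ ≤ m + 1 →
      |B u v z| ≤ C * ε ^ (-(3:ℝ)) * (m + 1) ^ 2 * ‖jH z‖ ^ 2 * ‖u‖ ^ 2
        + 2 * ε * ‖v - u‖ ^ 2 + 2 * ε * ‖u‖ ^ 2 * θ ^ 2 + ε * ‖z‖ ^ 2 :=
  stmt6_general jH jQ a₀ ha₀ hQnorm B C_B hC_B hB
end

section
/- There exists a constant C > 0, depending only on a₀ and C_B, such that for all ε > 0, δ > 0, p > 0, every real m ≥ 0, every real θ ≥ δ, and all u, z ∈ V with |u| ≤ m + 1: |⟨B(u,u),z⟩| ≤ C ε⁻³ δ^{-4p} (m+1)² ‖u‖² |z|² + ε ‖z‖² + C ε δ^{2(p−1)} ‖u‖² θ². -/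
/-!
Since `|u|_Q² ≤ a₀ (m+1) ‖u‖` and `|z|_Q² ≤ a₀ |z| ‖z‖`, the bound on `B` gives
`|⟨B(u,u),z⟩|⁴ ≤ (C_B a₀)⁴ (m+1)² ‖u‖⁶ |z|² ‖z‖²`. The three terms `a, b, c` of the
right-hand side (with `θ` lowered to `δ`) are chosen so that `a b c²` is exactly
`C³ (m+1)² ‖u‖⁶ |z|² ‖z‖²`: the powers of `ε` and `δ` cancel. A four-factor AM-GM
`a b c² ≤ (a + b + c)⁴` then finishes, with `C` large enough that `C³ ≥ (C_B a₀)⁴`.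
-/

theorem mul_mul_sq_le_add_add_pow_four {a b c : ℝ} (ha : 0 ≤ a) (hb : 0 ≤ b) (hc : 0 ≤ c) :
    a * b * c ^ 2 ≤ (a + b + c) ^ 4 := by
  calc a * b * c ^ 2 ≤ (a + b + c) * (a + b + c) * (a + b + c) ^ 2 := by
        gcongr <;> linarith
    _ = (a + b + c) ^ 4 := by ring

theorem le_add_add_of_pow_four_le_mul_mul_sq {x a b c : ℝ} (ha : 0 ≤ a) (hb : 0 ≤ b)
    (hc : 0 ≤ c) (h : x ^ 4 ≤ a * b * c ^ 2) : x ≤ a + b + c :=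
  le_of_pow_le_pow_left₀ four_ne_zero (by positivity)
    (h.trans (mul_mul_sq_le_add_add_pow_four ha hb hc))

theorem le_young_split {x C ε δ p M U Z W : ℝ} (hC : 0 ≤ C) (hε : 0 < ε) (hδ : 0 < δ)
    (h : x ^ 4 ≤ C ^ 3 * M ^ 2 * U ^ 6 * Z ^ 2 * W ^ 2) :
    x ≤ C * ε ^ (-(3:ℝ)) * δ ^ (-(4 * p)) * M ^ 2 * U ^ 2 * Z ^ 2 + ε * W ^ 2
      + C * ε * δ ^ (2 * (p - 1)) * U ^ 2 * δ ^ 2 := by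
  have hε₃ : ε ^ (-(3:ℝ)) = (ε ^ 3)⁻¹ := by
    rw [Real.rpow_neg hε.le, Real.rpow_ofNat]
  have hδ₄ : δ ^ (-(4 * p)) = ((δ ^ p) ^ 4)⁻¹ := by
    rw [Real.rpow_neg hδ.le, mul_comm, Real.rpow_mul hδ.le, Real.rpow_ofNat]
  have hδ₂ : δ ^ (2 * (p - 1)) * δ ^ 2 = (δ ^ p) ^ 2 := by
    rw [← Real.rpow_ofNat δ 2, ← Real.rpow_add hδ, ← Real.rpow_ofNat (δ ^ p) 2,
      ← Real.rpow_mul hδ.le]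
    ring_nf
  refine le_add_add_of_pow_four_le_mul_mul_sq (by positivity) (by positivity) (by positivity)
    (h.trans_eq ?_)
  rw [hε₃, hδ₄, show C * ε * δ ^ (2 * (p - 1)) * U ^ 2 * δ ^ 2 = C * ε * U ^ 2 * (δ ^ p) ^ 2 by
    rw [← hδ₂]; ring]
  field_simp

theorem pow_four_abs_le_of_interpolation {V H Q : Type*} [SeminormedAddCommGroup V]
    [SeminormedAddCommGroup H] [SeminormedAddCommGroup Q] {jH : V → H} {jQ : V → Q} {a₀ : ℝ}
    (ha₀ : 0 ≤ a₀) (hQnorm : ∀ v, ‖jQ v‖ ^ 2 ≤ a₀ * ‖jH v‖ * ‖v‖) {b : V → V → V → ℝ}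
    {C_B : ℝ} (hb : ∀ u v w, |b u v w| ≤ C_B * ‖jQ u‖ * ‖v‖ * ‖jQ w‖) {m : ℝ} {u : V}
    (hu : ‖jH u‖ ≤ m + 1) (z : V) :
    |b u u z| ^ 4 ≤ (C_B * a₀) ^ 4 * (m + 1) ^ 2 * ‖u‖ ^ 6 * ‖jH z‖ ^ 2 * ‖z‖ ^ 2 := by
  have hQu : ‖jQ u‖ ^ 2 ≤ a₀ * (m + 1) * ‖u‖ := (hQnorm u).trans (by gcongr)
  calc |b u u z| ^ 4 ≤ (C_B * ‖jQ u‖ * ‖u‖ * ‖jQ z‖) ^ 4 := by gcongr; exact hb u u z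
    _ = C_B ^ 4 * (‖jQ u‖ ^ 2) ^ 2 * ‖u‖ ^ 4 * (‖jQ z‖ ^ 2) ^ 2 := by ring
    _ ≤ C_B ^ 4 * (a₀ * (m + 1) * ‖u‖) ^ 2 * ‖u‖ ^ 4 * (a₀ * ‖jH z‖ * ‖z‖) ^ 2 := by
        gcongr; exact hQnorm z
    _ = (C_B * a₀) ^ 4 * (m + 1) ^ 2 * ‖u‖ ^ 6 * ‖jH z‖ ^ 2 * ‖z‖ ^ 2 := by ring

theorem stmt7_general
    {H V Q : Type*}
    [NormedAddCommGroup H] [InnerProductSpace ℝ H]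
    [NormedAddCommGroup V] [InnerProductSpace ℝ V]
    [NormedAddCommGroup Q] [NormedSpace ℝ Q]
    (jH : V →L[ℝ] H)
    (jQ : V →L[ℝ] Q)
    (a₀ : ℝ) (ha₀ : 0 < a₀)
    (hQnorm : ∀ v : V, ‖jQ v‖ ^ 2 ≤ a₀ * ‖jH v‖ * ‖v‖)
    (B : V →L[ℝ] V →L[ℝ] V →L[ℝ] ℝ)
    (C_B : ℝ) (hC_B : 0 < C_B)
    (hB : ∀ u v w : V, |B u v w| ≤ C_B * ‖jQ u‖ * ‖v‖ * ‖jQ w‖) :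
    ∃ C : ℝ, 0 < C ∧ ∀ ε δ p : ℝ, 0 < ε → 0 < δ → 0 < p → ∀ m θ : ℝ, 0 ≤ m → δ ≤ θ →
      ∀ u z : V, ‖jH u‖ ≤ m + 1 →
      |B u u z| ≤ C * ε ^ (-(3:ℝ)) * δ ^ (-(4 * p)) * (m + 1) ^ 2 * ‖u‖ ^ 2 * ‖jH z‖ ^ 2
        + ε * ‖z‖ ^ 2 + C * ε * δ ^ (2 * (p - 1)) * ‖u‖ ^ 2 * θ ^ 2 := by
  have hx : 0 ≤ C_B * a₀ := by positivity
  refine ⟨(1 + C_B * a₀) ^ 4, by positivity, ?_⟩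
  intro ε δ p hε hδ _ m θ _ hθ u z hu
  have hC : (C_B * a₀) ^ 4 ≤ ((1 + C_B * a₀) ^ 4) ^ 3 :=
    calc (C_B * a₀) ^ 4 ≤ (1 + C_B * a₀) ^ 4 := by gcongr; linarith
      _ ≤ ((1 + C_B * a₀) ^ 4) ^ 3 :=
        le_self_pow₀ (one_le_pow₀ (by linarith)) three_ne_zero
  have hBuz := pow_four_abs_le_of_interpolation ha₀.le hQnorm (b := fun u v w ↦ B u v w) hB hu z
  refine (le_young_split (C := (1 + C_B * a₀) ^ 4) (p := p) (by positivity) hε hδ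
    (hBuz.trans (by gcongr))).trans ?_
  gcongr

/-- There exists a constant `C > 0`, depending only on `a₀` and `C_B`,
such that for all `ε > 0`, `δ > 0`, `p > 0`, every real `m ≥ 0`, every real `θ ≥ δ`,
and all `u, z ∈ V` with `|u| ≤ m + 1`:
`|⟨B(u,u),z⟩| ≤ C ε⁻³ δ^{-4p} (m+1)² ‖u‖² |z|² + ε ‖z‖² + C ε δ^{2(p−1)} ‖u‖² θ²`. -/
theorem stmt7
    {H V Q : Type*}
    [NormedAddCommGroup H] [InnerProductSpace ℝ H] [TopologicalSpace.SeparableSpace H]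
    [NormedAddCommGroup V] [InnerProductSpace ℝ V] [TopologicalSpace.SeparableSpace V]
    [NormedAddCommGroup Q] [NormedSpace ℝ Q]
    (jH : V →L[ℝ] H) (hjH : Function.Injective jH)
    (jQ : V →L[ℝ] Q) (hjQ : Function.Injective jQ)
    (a₀ : ℝ) (ha₀ : 0 < a₀)
    (hQnorm : ∀ v : V, ‖jQ v‖ ^ 2 ≤ a₀ * ‖jH v‖ * ‖v‖)
    (B : V →L[ℝ] V →L[ℝ] V →L[ℝ] ℝ)
    (C_B : ℝ) (hC_B : 0 < C_B)
    (hB : ∀ u v w : V, |B u v w| ≤ C_B * ‖jQ u‖ * ‖v‖ * ‖jQ w‖) :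
    ∃ C : ℝ, 0 < C ∧ ∀ ε δ p : ℝ, 0 < ε → 0 < δ → 0 < p → ∀ m θ : ℝ, 0 ≤ m → δ ≤ θ →
      ∀ u z : V, ‖jH u‖ ≤ m + 1 →
      |B u u z| ≤ C * ε ^ (-(3:ℝ)) * δ ^ (-(4 * p)) * (m + 1) ^ 2 * ‖u‖ ^ 2 * ‖jH z‖ ^ 2
        + ε * ‖z‖ ^ 2 + C * ε * δ ^ (2 * (p - 1)) * ‖u‖ ^ 2 * θ ^ 2 :=
  stmt7_general jH jQ a₀ ha₀ hQnorm B C_B hC_B hB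
end

section
/- There exists a constant C > 0, depending only on a₀ and C_B, such that for all ε > 0, δ > 0, p > 0, every real m ≥ 0, every real θ ≥ δ, and all u, v, z ∈ V with |u| ≤ m + 1: |⟨B(u,v),z⟩| ≤ C δ^{-4p} (m+1)² |z|² ‖u‖² + ε ‖z‖² + 2 ε^{-1/2} δ^{2p} ‖v − u‖² + 2 ε^{-1/2} δ^{2p−2} θ² ‖u‖². -/
/-!
Interpolation bounds `(C_B |u|_Q |z|_Q)²` by `(C_B a₀)² (|u| ‖u‖ |z|) ‖z‖`. Split
`‖v‖ ≤ ‖v - u‖ + ‖u‖`; each resulting product `C_B |u|_Q |z|_Q · S` is bounded by a weighted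
AM-GM with weight `√ε / δ^{2p}`, and the square it leaves by a second AM-GM separating
`|u| ‖u‖ |z|` from `‖z‖`. Finally `δ^{2p} ≤ δ^{2p-2} θ²` because `δ ≤ θ`.
-/

theorem mul_le_mul_sq_div_two_add_sq_div {t : ℝ} (ht : 0 < t) (a b : ℝ) :
    a * b ≤ t * a ^ 2 / 2 + b ^ 2 / (2 * t) := by
  have h : 0 ≤ (t * a - b) ^ 2 / (2 * t) := by positivity
  have e : t * a ^ 2 / 2 + b ^ 2 / (2 * t) - a * b = (t * a - b) ^ 2 / (2 * t) := by
    field_simp; ring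
  linarith

theorem mul_le_of_sq_le_mul {P X W S s η : ℝ} (hP : P ^ 2 ≤ X * W) (hs : 0 < s) (hη : 0 < η) :
    P * S ≤ X ^ 2 / (4 * s ^ 2) + η ^ 2 * W ^ 2 / 4 + s * S ^ 2 / (2 * η) := by
  have hXW : X * W ≤ s / η * ((X / s) ^ 2 / 2 + (η * W) ^ 2 / 2) := by
    have := mul_le_mul_sq_div_two_add_sq_div one_pos (X / s) (η * W)
    calc X * W = s / η * ((X / s) * (η * W)) := by field_simp
      _ ≤ _ := by gcongr; linarith
  calc P * S ≤ η / s * P ^ 2 / 2 + S ^ 2 / (2 * (η / s)) :=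
        mul_le_mul_sq_div_two_add_sq_div (by positivity) P S
    _ ≤ η / s * (s / η * ((X / s) ^ 2 / 2 + (η * W) ^ 2 / 2)) / 2 + S ^ 2 / (2 * (η / s)) := by
        gcongr; exact hP.trans hXW
    _ = _ := by field_simp; ring

theorem rpow_le_rpow_sub_two_mul_sq {δ θ : ℝ} (hδ : 0 < δ) (hθ : δ ≤ θ) (x : ℝ) :
    δ ^ x ≤ δ ^ (x - 2) * θ ^ 2 := by
  rw [Real.rpow_sub hδ, Real.rpow_two, div_mul_eq_mul_div, le_div_iff₀ (by positivity)]
  gcongr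

section Trilinear

variable {V H Q : Type*} [SeminormedAddCommGroup V] [NormedSpace ℝ V]
  [SeminormedAddCommGroup H] [NormedSpace ℝ H] [SeminormedAddCommGroup Q] [NormedSpace ℝ Q]
  {jH : V →L[ℝ] H} {jQ : V →L[ℝ] Q} {B : V →L[ℝ] V →L[ℝ] V →L[ℝ] ℝ} {a₀ C_B : ℝ}

theorem sq_mul_norm_mul_norm_le (ha₀ : 0 ≤ a₀) (hQ : ∀ v : V, ‖jQ v‖ ^ 2 ≤ a₀ * ‖jH v‖ * ‖v‖)
    (C : ℝ) (u z : V) :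
    (C * (‖jQ u‖ * ‖jQ z‖)) ^ 2 ≤ (C * a₀) ^ 2 * (‖jH u‖ * ‖u‖ * ‖jH z‖) * ‖z‖ := by
  have h := mul_le_mul (hQ u) (hQ z) (by positivity) (by positivity)
  calc (C * (‖jQ u‖ * ‖jQ z‖)) ^ 2 = C ^ 2 * (‖jQ u‖ ^ 2 * ‖jQ z‖ ^ 2) := by ring
    _ ≤ C ^ 2 * (a₀ * ‖jH u‖ * ‖u‖ * (a₀ * ‖jH z‖ * ‖z‖)) := by gcongr
    _ = _ := by ring

theorem abs_apply_le_mul_add_mul (hC_B : 0 ≤ C_B)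
    (hB : ∀ u v w : V, |B u v w| ≤ C_B * ‖jQ u‖ * ‖v‖ * ‖jQ w‖) (u v z : V) :
    |B u v z| ≤ C_B * (‖jQ u‖ * ‖jQ z‖) * ‖v - u‖ + C_B * (‖jQ u‖ * ‖jQ z‖) * ‖u‖ := by
  have hv : ‖v‖ ≤ ‖v - u‖ + ‖u‖ := norm_le_norm_sub_add v u
  calc |B u v z| ≤ C_B * ‖jQ u‖ * ‖v‖ * ‖jQ z‖ := hB u v z
    _ = C_B * (‖jQ u‖ * ‖jQ z‖) * ‖v‖ := by ring
    _ ≤ C_B * (‖jQ u‖ * ‖jQ z‖) * (‖v - u‖ + ‖u‖) := by gcongr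
    _ = _ := by ring

theorem abs_apply_le_of_interpolation (ha₀ : 0 ≤ a₀)
    (hQ : ∀ v : V, ‖jQ v‖ ^ 2 ≤ a₀ * ‖jH v‖ * ‖v‖) (hC_B : 0 ≤ C_B)
    (hB : ∀ u v w : V, |B u v w| ≤ C_B * ‖jQ u‖ * ‖v‖ * ‖jQ w‖)
    {s η : ℝ} (hs : 0 < s) (hη : 0 < η) (u v z : V) :
    |B u v z| ≤ (C_B * a₀) ^ 4 * (‖jH u‖ * ‖u‖ * ‖jH z‖) ^ 2 / (2 * s ^ 2)
      + η ^ 2 * ‖z‖ ^ 2 / 2 + s * (‖v - u‖ ^ 2 + ‖u‖ ^ 2) / (2 * η) := by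
  have hP := sq_mul_norm_mul_norm_le ha₀ hQ C_B u z
  have hD := mul_le_of_sq_le_mul hP hs hη (S := ‖v - u‖)
  have hU := mul_le_of_sq_le_mul hP hs hη (S := ‖u‖)
  calc |B u v z| ≤ _ := abs_apply_le_mul_add_mul hC_B hB u v z
    _ ≤ _ := add_le_add hD hU
    _ = _ := by ring

theorem abs_apply_le_of_norm_le (ha₀ : 0 ≤ a₀)
    (hQ : ∀ v : V, ‖jQ v‖ ^ 2 ≤ a₀ * ‖jH v‖ * ‖v‖) (hC_B : 0 ≤ C_B)
    (hB : ∀ u v w : V, |B u v w| ≤ C_B * ‖jQ u‖ * ‖v‖ * ‖jQ w‖)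
    {M s t η : ℝ} (hs : 0 < s) (hst : s ≤ t) (hη : 0 < η) {u : V} (hu : ‖jH u‖ ≤ M) (v z : V) :
    |B u v z| ≤ (C_B * a₀) ^ 4 / 2 * (s ^ 2)⁻¹ * M ^ 2 * ‖jH z‖ ^ 2 * ‖u‖ ^ 2
      + η ^ 2 * ‖z‖ ^ 2 + 2 * η⁻¹ * s * ‖v - u‖ ^ 2 + 2 * η⁻¹ * t * ‖u‖ ^ 2 := by
  have hY : (‖jH u‖ * ‖u‖ * ‖jH z‖) ^ 2 ≤ M ^ 2 * ‖jH z‖ ^ 2 * ‖u‖ ^ 2 := by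
    calc _ = ‖jH u‖ ^ 2 * ‖jH z‖ ^ 2 * ‖u‖ ^ 2 := by ring
      _ ≤ _ := by gcongr
  have hc : 0 ≤ (C_B * a₀) ^ 4 / 2 * (s ^ 2)⁻¹ := by positivity
  have hW : 0 ≤ η ^ 2 * ‖z‖ ^ 2 := by positivity
  have hD : 0 ≤ η⁻¹ * s * ‖v - u‖ ^ 2 := by positivity
  have hU₀ : 0 ≤ η⁻¹ * s * ‖u‖ ^ 2 := by positivity
  have hU : η⁻¹ * s * ‖u‖ ^ 2 ≤ η⁻¹ * t * ‖u‖ ^ 2 := by gcongr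
  calc |B u v z|
      ≤ (C_B * a₀) ^ 4 * (‖jH u‖ * ‖u‖ * ‖jH z‖) ^ 2 / (2 * s ^ 2)
        + η ^ 2 * ‖z‖ ^ 2 / 2 + s * (‖v - u‖ ^ 2 + ‖u‖ ^ 2) / (2 * η) :=
        abs_apply_le_of_interpolation ha₀ hQ hC_B hB hs hη u v z
    _ = (C_B * a₀) ^ 4 / 2 * (s ^ 2)⁻¹ * (‖jH u‖ * ‖u‖ * ‖jH z‖) ^ 2 + η ^ 2 * ‖z‖ ^ 2 / 2
        + η⁻¹ * s * ‖v - u‖ ^ 2 / 2 + η⁻¹ * s * ‖u‖ ^ 2 / 2 := by ring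
    _ ≤ (C_B * a₀) ^ 4 / 2 * (s ^ 2)⁻¹ * (M ^ 2 * ‖jH z‖ ^ 2 * ‖u‖ ^ 2) + η ^ 2 * ‖z‖ ^ 2
        + 2 * (η⁻¹ * s * ‖v - u‖ ^ 2) + 2 * (η⁻¹ * t * ‖u‖ ^ 2) := by
      linarith [mul_le_mul_of_nonneg_left hY hc]
    _ = _ := by ring

end Trilinear

theorem stmt8_general
    {H V Q : Type*}
    [NormedAddCommGroup H] [InnerProductSpace ℝ H]
    [NormedAddCommGroup V] [InnerProductSpace ℝ V]
    [NormedAddCommGroup Q] [NormedSpace ℝ Q]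
    (jH : V →L[ℝ] H)
    (jQ : V →L[ℝ] Q)
    (a₀ : ℝ) (ha₀ : 0 < a₀)
    (hQnorm : ∀ v : V, ‖jQ v‖ ^ 2 ≤ a₀ * ‖jH v‖ * ‖v‖)
    (B : V →L[ℝ] V →L[ℝ] V →L[ℝ] ℝ)
    (C_B : ℝ) (hC_B : 0 < C_B)
    (hB : ∀ u v w : V, |B u v w| ≤ C_B * ‖jQ u‖ * ‖v‖ * ‖jQ w‖) :
    ∃ C : ℝ, 0 < C ∧ ∀ ε δ p : ℝ, 0 < ε → 0 < δ → 0 < p → ∀ m θ : ℝ, 0 ≤ m → δ ≤ θ →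
      ∀ u v z : V, ‖jH u‖ ≤ m + 1 →
      |B u v z| ≤ C * δ ^ (-(4 * p)) * (m + 1) ^ 2 * ‖jH z‖ ^ 2 * ‖u‖ ^ 2
        + ε * ‖z‖ ^ 2 + 2 * ε ^ (-(1:ℝ)/2) * δ ^ (2 * p) * ‖v - u‖ ^ 2
        + 2 * ε ^ (-(1:ℝ)/2) * δ ^ (2 * p - 2) * θ ^ 2 * ‖u‖ ^ 2 := by
  refine ⟨(C_B * a₀) ^ 4 / 2, by positivity, ?_⟩
  intro ε δ p hε hδ _ m θ _ hθ u v z hu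
  have hs : 0 < δ ^ (2 * p) := Real.rpow_pos_of_pos hδ _
  have hδ4 : δ ^ (-(4 * p)) = ((δ ^ (2 * p)) ^ 2)⁻¹ := by
    rw [← Real.rpow_two, ← Real.rpow_mul hδ.le, ← Real.rpow_neg hδ.le]; ring_nf
  have hε2 : ε ^ (-(1:ℝ)/2) = (√ε)⁻¹ := by
    rw [Real.sqrt_eq_rpow, ← Real.rpow_neg hε.le]; ring_nf
  have h := abs_apply_le_of_norm_le ha₀.le hQnorm hC_B.le hB hs
    (rpow_le_rpow_sub_two_mul_sq hδ hθ _) (Real.sqrt_pos.2 hε) hu v z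
  rw [Real.sq_sqrt hε.le] at h
  rw [hδ4, hε2]
  exact h.trans_eq (by ring)

/-- There exists a constant `C > 0`, depending only on `a₀` and `C_B`,
such that for all `ε > 0`, `δ > 0`, `p > 0`, every real `m ≥ 0`, every real `θ ≥ δ`,
and all `u, v, z ∈ V` with `|u| ≤ m + 1`:
`|⟨B(u,v),z⟩| ≤ C δ^{-4p} (m+1)² |z|² ‖u‖² + ε ‖z‖² + 2 ε^{-1/2} δ^{2p} ‖v − u‖²
  + 2 ε^{-1/2} δ^{2p−2} θ² ‖u‖²`. -/
theorem stmt8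
    {H V Q : Type*}
    [NormedAddCommGroup H] [InnerProductSpace ℝ H] [TopologicalSpace.SeparableSpace H]
    [NormedAddCommGroup V] [InnerProductSpace ℝ V] [TopologicalSpace.SeparableSpace V]
    [NormedAddCommGroup Q] [NormedSpace ℝ Q]
    (jH : V →L[ℝ] H) (hjH : Function.Injective jH)
    (jQ : V →L[ℝ] Q) (hjQ : Function.Injective jQ)
    (a₀ : ℝ) (ha₀ : 0 < a₀)
    (hQnorm : ∀ v : V, ‖jQ v‖ ^ 2 ≤ a₀ * ‖jH v‖ * ‖v‖)
    (B : V →L[ℝ] V →L[ℝ] V →L[ℝ] ℝ)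
    (C_B : ℝ) (hC_B : 0 < C_B)
    (hB : ∀ u v w : V, |B u v w| ≤ C_B * ‖jQ u‖ * ‖v‖ * ‖jQ w‖) :
    ∃ C : ℝ, 0 < C ∧ ∀ ε δ p : ℝ, 0 < ε → 0 < δ → 0 < p → ∀ m θ : ℝ, 0 ≤ m → δ ≤ θ →
      ∀ u v z : V, ‖jH u‖ ≤ m + 1 →
      |B u v z| ≤ C * δ ^ (-(4 * p)) * (m + 1) ^ 2 * ‖jH z‖ ^ 2 * ‖u‖ ^ 2
        + ε * ‖z‖ ^ 2 + 2 * ε ^ (-(1:ℝ)/2) * δ ^ (2 * p) * ‖v - u‖ ^ 2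
        + 2 * ε ^ (-(1:ℝ)/2) * δ ^ (2 * p - 2) * θ ^ 2 * ‖u‖ ^ 2 :=
  stmt8_general jH jQ a₀ ha₀ hQnorm B C_B hC_B hB
end

section
/- There exists a constant C > 0, depending only on a₀, C_B, L_φ and K, such that for every ε > 0 and every t > 0 with |y_n|_{ξ_t} ≤ 3δ and |y_{n−1}|_{ξ_t} ≤ 3δ: I_n(t) ≤ 5ε ‖y_{n+1}(t) − y_n(t)‖² + 2ε ‖y_n(t) − y_{n−1}(t)‖² + C ε δ^{-3/2} ‖y_n(t)‖² |y_n − y_{n−1}|_{ξ_t}² + 3ε |y_n(t) − y_{n−1}(t)|² Ξ_n(t) + C ε⁻³ (1 + (m+2)² + δ⁻¹(m+2)²) |y_{n+1}(t) − y_n(t)|² Ξ_n(t). -/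
/-!
Skew-symmetry gives `B(y_n, y_{n+1}, w) = B(y_n, y_n, w)` for `w = y_{n+1} - y_n`, so `I_n` is
`φ g B(y_n - y_{n-1}, y_n, w)` plus the two cut-off differences `(Δφ) g B(y_n, y_n, w)` and
`φ (Δg) B(y_n, y_n, w)`. Through `|v|_Q² ≤ a₀ |v| ‖v‖` the fourth power of each term is bounded by
a product of the squares appearing in the claim, and the four-factor AM-GM inequality splits it
into their sum. A cut-off difference is at most `1`, is Lipschitz in `|y_n - y_{n-1}|` (for `φ`) or,
by Minkowski's inequality in `L²(0,t;V)`, in `|y_n - y_{n-1}|_{ξ_t}` (for `g`), and where it does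
not vanish, `|y_n| ≤ m + 2 + |y_n - y_{n-1}|`.
-/

open MeasureTheory Set

lemma le_add_add_add_of_pow_four_le {T x y z w : ℝ} (hx : 0 ≤ x) (hy : 0 ≤ y) (hz : 0 ≤ z)
    (hw : 0 ≤ w) (h : T ^ 4 ≤ 256 * (x * y * z * w)) : T ≤ x + y + z + w := by
  have hxy : 4 * (x * y) ≤ (x + y) ^ 2 := by nlinarith [sq_nonneg (x - y)]
  have hzw : 4 * (z * w) ≤ (z + w) ^ 2 := by nlinarith [sq_nonneg (z - w)]
  have hsum : 4 * ((x + y) * (z + w)) ≤ (x + y + z + w) ^ 2 := by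
    nlinarith [sq_nonneg (x + y - z - w)]
  have amgm : 256 * (x * y * z * w) ≤ (x + y + z + w) ^ 4 :=
    calc 256 * (x * y * z * w) = 16 * ((4 * (x * y)) * (4 * (z * w))) := by ring
      _ ≤ 16 * ((x + y) ^ 2 * (z + w) ^ 2) := by gcongr
      _ = (4 * ((x + y) * (z + w))) ^ 2 := by ring
      _ ≤ ((x + y + z + w) ^ 2) ^ 2 := by gcongr
      _ = (x + y + z + w) ^ 4 := by ring
  exact le_of_pow_le_pow_left₀ four_ne_zero (by positivity) (h.trans amgm)

lemma le_add_add_of_pow_four_le {T x y z : ℝ} (hx : 0 ≤ x) (hy : 0 ≤ y) (hz : 0 ≤ z)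
    (h : T ^ 4 ≤ 64 * (x * y ^ 2 * z)) : T ≤ x + y + z := by
  have := le_add_add_add_of_pow_four_le (T := T) hx (by positivity : 0 ≤ y / 2)
    (by positivity : 0 ≤ y / 2) hz (by linarith)
  linarith

lemma sq_mul_le_of_abs_le {c ρ h M s : ℝ} (hc : |c| ≤ 1) (hcρ : |c| ≤ ρ)
    (hh : c ≠ 0 → h ≤ M + s) (hM : 0 ≤ M) (hs : 0 ≤ s) :
    c ^ 2 * h ≤ ρ ^ 2 * M + ρ * s := by
  have hρ : 0 ≤ ρ := (abs_nonneg c).trans hcρ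
  rcases eq_or_ne c 0 with rfl | hc0
  · rw [zero_pow two_ne_zero, zero_mul]
    positivity
  have hc2ρ : c ^ 2 ≤ ρ ^ 2 := by
    rw [← sq_abs]; exact pow_le_pow_left₀ (abs_nonneg c) hcρ 2
  have hc2 : c ^ 2 ≤ |c| := by
    rw [← sq_abs]; nlinarith [abs_nonneg c]
  calc c ^ 2 * h ≤ c ^ 2 * M + c ^ 2 * s := by
        rw [← mul_add]; exact mul_le_mul_of_nonneg_left (hh hc0) (sq_nonneg c)
    _ ≤ ρ ^ 2 * M + ρ * s := by gcongr; exact hc2.trans hcρ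

lemma rpow_neg_three_halves {δ : ℝ} (hδ : 0 < δ) : δ ^ (-(3:ℝ) / 2) = (√δ)⁻¹ ^ 3 := by
  rw [Real.sqrt_eq_rpow, ← Real.inv_rpow hδ.le, ← Real.rpow_natCast,
    ← Real.rpow_mul (by positivity), Real.inv_rpow hδ.le, ← Real.rpow_neg hδ.le]
  norm_num

-- For `P = δ^{-3/2}`: `(K/δ)⁴ / P² = K⁴ δ⁻¹` and `(K/δ)² / P = K² δ^{-1/2} ≤ K² (1 + δ⁻¹)`.
lemma cutoff_constant_le {δ K L M : ℝ} (hδ : 0 < δ) (hM : 1 ≤ M) :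
    1 + (L ^ 2 + L ^ 4) * (1 + M ^ 2) + (K / δ) ^ 4 * M ^ 2 / (δ ^ (-(3:ℝ) / 2)) ^ 2
        + (K / δ) ^ 2 / δ ^ (-(3:ℝ) / 2)
      ≤ (1 + L ^ 2 + L ^ 4 + K ^ 2 + K ^ 4) * (1 + M ^ 2 + δ⁻¹ * M ^ 2) := by
  set u := (√δ)⁻¹ with hu
  have hu0 : 0 < u := by positivity
  have hδu : δ⁻¹ = u ^ 2 := by rw [hu, inv_pow, Real.sq_sqrt hδ.le]
  have hKδ : K / δ = K * u ^ 2 := by rw [div_eq_mul_inv, hδu]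
  rw [rpow_neg_three_halves hδ, ← hu, hKδ, hδu]
  have h1 : (K * u ^ 2) ^ 4 * M ^ 2 / (u ^ 3) ^ 2 = K ^ 4 * (u ^ 2 * M ^ 2) := by
    field_simp
  have h2 : (K * u ^ 2) ^ 2 / u ^ 3 = K ^ 2 * u := by
    field_simp
  rw [h1, h2]
  set Φ := 1 + M ^ 2 + u ^ 2 * M ^ 2
  have hM2 : 1 ≤ M ^ 2 := one_le_pow₀ hM
  have hu2 : 0 ≤ u ^ 2 * M ^ 2 := by positivity
  have hΦ1 : 1 ≤ Φ := by linarith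
  have hΦM : 1 + M ^ 2 ≤ Φ := by linarith
  have hΦu : u ^ 2 * M ^ 2 ≤ Φ := by linarith
  have hΦu' : u ≤ Φ := by nlinarith [sq_nonneg (u - 1)]
  have hL : 0 ≤ L ^ 2 + L ^ 4 := by positivity
  nlinarith [mul_le_mul_of_nonneg_left hΦM hL,
    mul_le_mul_of_nonneg_left hΦu (by positivity : (0:ℝ) ≤ K ^ 4),
    mul_le_mul_of_nonneg_left hΦu' (sq_nonneg K)]

lemma sqrt_integral_norm_sq_eq_norm_toLp {α E : Type*} [MeasurableSpace α] {μ : Measure α}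
    [NormedAddCommGroup E] {f : α → E} (hf : MemLp f 2 μ) :
    √(∫ x, ‖f x‖ ^ 2 ∂μ) = ‖hf.toLp f‖ := by
  rw [Lp.norm_toLp, hf.eLpNorm_eq_integral_rpow_norm two_ne_zero ENNReal.ofNat_ne_top,
    ENNReal.toReal_ofReal (by positivity), Real.sqrt_eq_rpow]
  norm_num

lemma abs_sqrt_integral_norm_sq_sub_le {α E : Type*} [MeasurableSpace α] {μ : Measure α}
    [NormedAddCommGroup E] {f g : α → E} (hf : MemLp f 2 μ) (hg : MemLp g 2 μ) :
    |√(∫ x, ‖f x‖ ^ 2 ∂μ) - √(∫ x, ‖g x‖ ^ 2 ∂μ)| ≤ √(∫ x, ‖f x - g x‖ ^ 2 ∂μ) := by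
  have hfg := sqrt_integral_norm_sq_eq_norm_toLp (hf.sub hg)
  simp only [Pi.sub_apply] at hfg
  rw [sqrt_integral_norm_sq_eq_norm_toLp hf, sqrt_integral_norm_sq_eq_norm_toLp hg, hfg,
    MemLp.toLp_sub]
  exact abs_norm_sub_norm_le _ _

lemma abs_sub_le_mul_of_abs_deriv_le {f : ℝ → ℝ} {a L : ℝ} (hf : DifferentiableOn ℝ f (Ici a))
    (hL : ∀ x, a < x → |deriv f x| ≤ L) {x y : ℝ} (hx : a ≤ x) (hy : a ≤ y) :
    |f x - f y| ≤ L * |x - y| := by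
  wlog hxy : y < x generalizing x y
  · rcases (not_lt.mp hxy).eq_or_lt with rfl | hlt
    · simp
    · rw [abs_sub_comm, abs_sub_comm x]; exact this hy hx hlt
  obtain ⟨c, hc, hc'⟩ := exists_deriv_eq_slope f hxy
    (hf.continuousOn.mono (Icc_subset_Ici_self.trans (Ici_subset_Ici.mpr hy)))
    (fun z hz => (hf.differentiableAt (Ici_mem_nhds (hy.trans_lt hz.1))).differentiableWithinAt)
  rw [eq_div_iff (sub_ne_zero.mpr hxy.ne'), ← abs_of_pos (sub_pos.mpr hxy)] at hc'
  rw [← hc', abs_mul, abs_abs]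
  exact mul_le_mul_of_nonneg_right (hL c (hy.trans_lt hc.1)) (abs_nonneg _)

section Trilinear

variable {V H Q : Type*} [NormedAddCommGroup V] [NormedSpace ℝ V] [NormedAddCommGroup H]
  [NormedSpace ℝ H] [NormedAddCommGroup Q] [NormedSpace ℝ Q] {jH : V →L[ℝ] H} {jQ : V →L[ℝ] Q}
  {a₀ C_B : ℝ} {B : V →L[ℝ] V →L[ℝ] V →L[ℝ] ℝ}

lemma sq_apply_le_of_interpolation (hQ : ∀ v : V, ‖jQ v‖ ^ 2 ≤ a₀ * ‖jH v‖ * ‖v‖)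
    (hB : ∀ u v w : V, |B u v w| ≤ C_B * ‖jQ u‖ * ‖v‖ * ‖jQ w‖) (u v w : V) :
    B u v w ^ 2 ≤ (C_B * a₀) ^ 2 * (‖jH u‖ * ‖u‖) * ‖v‖ ^ 2 * (‖jH w‖ * ‖w‖) :=
  calc B u v w ^ 2 ≤ (C_B * ‖jQ u‖ * ‖v‖ * ‖jQ w‖) ^ 2 := by
        rw [← sq_abs]; exact pow_le_pow_left₀ (abs_nonneg _) (hB u v w) 2
    _ = C_B ^ 2 * ‖v‖ ^ 2 * (‖jQ u‖ ^ 2 * ‖jQ w‖ ^ 2) := by ring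
    _ ≤ C_B ^ 2 * ‖v‖ ^ 2 * ((a₀ * ‖jH u‖ * ‖u‖) * (a₀ * ‖jH w‖ * ‖w‖)) :=
        mul_le_mul_of_nonneg_left
          (mul_le_mul (hQ u) (hQ w) (sq_nonneg _) ((sq_nonneg _).trans (hQ u))) (by positivity)
    _ = (C_B * a₀) ^ 2 * (‖jH u‖ * ‖u‖) * ‖v‖ ^ 2 * (‖jH w‖ * ‖w‖) := by ring

lemma abs_apply_le_young (hQ : ∀ v : V, ‖jQ v‖ ^ 2 ≤ a₀ * ‖jH v‖ * ‖v‖)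
    (hB : ∀ u v w : V, |B u v w| ≤ C_B * ‖jQ u‖ * ‖v‖ * ‖jQ w‖) {ε : ℝ} (hε : 0 < ε)
    (u v w : V) :
    |B u v w| ≤ ε * ‖w‖ ^ 2 + ε * ‖u‖ ^ 2 + ε * (‖jH u‖ ^ 2 * ‖v‖ ^ 2)
      + (C_B * a₀) ^ 4 * (ε ^ 3)⁻¹ * (‖jH w‖ ^ 2 * ‖v‖ ^ 2) := by
  apply le_add_add_add_of_pow_four_le (by positivity) (by positivity) (by positivity)
    (by positivity)
  have hprod : ε * ‖w‖ ^ 2 * (ε * ‖u‖ ^ 2) * (ε * (‖jH u‖ ^ 2 * ‖v‖ ^ 2))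
      * ((C_B * a₀) ^ 4 * (ε ^ 3)⁻¹ * (‖jH w‖ ^ 2 * ‖v‖ ^ 2))
      = ((C_B * a₀) ^ 2 * (‖jH u‖ * ‖u‖) * ‖v‖ ^ 2 * (‖jH w‖ * ‖w‖)) ^ 2 := by
    field_simp
  calc |B u v w| ^ 4 = (B u v w ^ 2) ^ 2 := by rw [← sq_abs (B u v w)]; ring
    _ ≤ ((C_B * a₀) ^ 2 * (‖jH u‖ * ‖u‖) * ‖v‖ ^ 2 * (‖jH w‖ * ‖w‖)) ^ 2 :=
        pow_le_pow_left₀ (sq_nonneg _) (sq_apply_le_of_interpolation hQ hB u v w) 2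
    _ ≤ 256 * _ := by rw [hprod]; exact le_mul_of_one_le_left (sq_nonneg _) (by norm_num)

lemma sq_mul_apply_self_le (hQ : ∀ v : V, ‖jQ v‖ ^ 2 ≤ a₀ * ‖jH v‖ * ‖v‖)
    (hB : ∀ u v w : V, |B u v w| ≤ C_B * ‖jQ u‖ * ‖v‖ * ‖jQ w‖) {c ρ M s : ℝ} {v : V}
    (hc : |c| ≤ 1) (hcρ : |c| ≤ ρ) (hv : c ≠ 0 → ‖jH v‖ ≤ M + s) (hM : 0 ≤ M) (hs : 0 ≤ s)
    (w : V) :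
    (c * B v v w) ^ 2 ≤ (C_B * a₀) ^ 2 * (ρ ^ 2 * M + ρ * s) * ‖v‖ ^ 3 * (‖jH w‖ * ‖w‖) :=
  calc (c * B v v w) ^ 2 = c ^ 2 * B v v w ^ 2 := by ring
    _ ≤ c ^ 2 * ((C_B * a₀) ^ 2 * (‖jH v‖ * ‖v‖) * ‖v‖ ^ 2 * (‖jH w‖ * ‖w‖)) := by
        gcongr; exact sq_apply_le_of_interpolation hQ hB v v w
    _ = (C_B * a₀) ^ 2 * (c ^ 2 * ‖jH v‖) * ‖v‖ ^ 3 * (‖jH w‖ * ‖w‖) := by ring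
    _ ≤ (C_B * a₀) ^ 2 * (ρ ^ 2 * M + ρ * s) * ‖v‖ ^ 3 * (‖jH w‖ * ‖w‖) := by
        gcongr; exact sq_mul_le_of_abs_le hc hcρ hv hM hs

lemma abs_mul_apply_self_le_young_of_abs_le_mul_slack
    (hQ : ∀ v : V, ‖jQ v‖ ^ 2 ≤ a₀ * ‖jH v‖ * ‖v‖)
    (hB : ∀ u v w : V, |B u v w| ≤ C_B * ‖jQ u‖ * ‖v‖ * ‖jQ w‖) {ε : ℝ} (hε : 0 < ε)
    {c L M s : ℝ} {v : V} (hc : |c| ≤ 1) (hcL : |c| ≤ L * s) (hv : c ≠ 0 → ‖jH v‖ ≤ M + s)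
    (hM : 0 ≤ M) (hs : 0 ≤ s) (w : V) :
    |c * B v v w| ≤ ε * ‖w‖ ^ 2 + ε * (s ^ 2 * ‖v‖ ^ 2)
      + (C_B * a₀) ^ 4 * ((L ^ 2 + L ^ 4) * (1 + M ^ 2)) * (ε ^ 3)⁻¹
        * (‖jH w‖ ^ 2 * ‖v‖ ^ 2) := by
  apply le_add_add_of_pow_four_le (by positivity) (by positivity) (by positivity)
  have hsq := sq_mul_apply_self_le hQ hB hc hcL hv hM hs w
  have hL : (L ^ 2 * M + L) ^ 2 ≤ 64 * ((L ^ 2 + L ^ 4) * (1 + M ^ 2)) := by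
    nlinarith [sq_nonneg (L ^ 2 * M - L), sq_nonneg L, sq_nonneg (L ^ 2), sq_nonneg M,
      mul_nonneg (sq_nonneg (L ^ 2)) (sq_nonneg M)]
  have hprod : ε * ‖w‖ ^ 2 * (ε * (s ^ 2 * ‖v‖ ^ 2)) ^ 2
      * ((C_B * a₀) ^ 4 * ((L ^ 2 + L ^ 4) * (1 + M ^ 2)) * (ε ^ 3)⁻¹ * (‖jH w‖ ^ 2 * ‖v‖ ^ 2))
      = (C_B * a₀) ^ 4 * ((L ^ 2 + L ^ 4) * (1 + M ^ 2))
        * (s ^ 4 * ‖v‖ ^ 6 * (‖jH w‖ * ‖w‖) ^ 2) := by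
    field_simp
  calc |c * B v v w| ^ 4 = ((c * B v v w) ^ 2) ^ 2 := by rw [← sq_abs (c * B v v w)]; ring
    _ ≤ ((C_B * a₀) ^ 2 * ((L * s) ^ 2 * M + L * s * s) * ‖v‖ ^ 3 * (‖jH w‖ * ‖w‖)) ^ 2 :=
        pow_le_pow_left₀ (sq_nonneg _) hsq 2
    _ = (C_B * a₀) ^ 4 * (L ^ 2 * M + L) ^ 2 * (s ^ 4 * ‖v‖ ^ 6 * (‖jH w‖ * ‖w‖) ^ 2) := by
        ring
    _ ≤ (C_B * a₀) ^ 4 * (64 * ((L ^ 2 + L ^ 4) * (1 + M ^ 2)))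
          * (s ^ 4 * ‖v‖ ^ 6 * (‖jH w‖ * ‖w‖) ^ 2) := by gcongr
    _ = _ := by rw [hprod]; ring

lemma abs_mul_apply_self_le_young_of_abs_le_mul
    (hQ : ∀ v : V, ‖jQ v‖ ^ 2 ≤ a₀ * ‖jH v‖ * ‖v‖)
    (hB : ∀ u v w : V, |B u v w| ≤ C_B * ‖jQ u‖ * ‖v‖ * ‖jQ w‖) {ε P : ℝ} (hε : 0 < ε)
    (hP : 0 < P) {c κ r M s : ℝ} {v : V} (hc : |c| ≤ 1) (hcκ : |c| ≤ κ * r)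
    (hv : c ≠ 0 → ‖jH v‖ ≤ M + s) (hM : 0 ≤ M) (hs : 0 ≤ s) (w : V) :
    |c * B v v w| ≤ ε * ‖w‖ ^ 2 + ε * (s ^ 2 * ‖v‖ ^ 2) + ε * P * (r ^ 2 * ‖v‖ ^ 2)
      + (C_B * a₀) ^ 4 * (κ ^ 4 * M ^ 2 / P ^ 2 + κ ^ 2 / P) * (ε ^ 3)⁻¹
        * (‖jH w‖ ^ 2 * ‖v‖ ^ 2) := by
  have hsq := sq_mul_apply_self_le hQ hB hc hcκ hv hM hs w
  set R := ‖v‖ ^ 6 * (‖jH w‖ * ‖w‖) ^ 2 with hR_def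
  have hT : |c * B v v w| ^ 4 = ((c * B v v w) ^ 2) ^ 2 := by rw [← sq_abs (c * B v v w)]; ring
  -- Young's inequality is applied to whichever of `(κ r)² M` and `κ r s` dominates.
  rcases le_total (κ * r * s) ((κ * r) ^ 2 * M) with hdom | hdom
  · have key : |c * B v v w| ≤ ε * ‖w‖ ^ 2 + ε * P * (r ^ 2 * ‖v‖ ^ 2)
        + (C_B * a₀) ^ 4 * (κ ^ 4 * M ^ 2 / P ^ 2) * (ε ^ 3)⁻¹ * (‖jH w‖ ^ 2 * ‖v‖ ^ 2) := by
      apply le_add_add_of_pow_four_le (by positivity) (by positivity) (by positivity)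
      calc |c * B v v w| ^ 4
          ≤ ((C_B * a₀) ^ 2 * (2 * ((κ * r) ^ 2 * M)) * ‖v‖ ^ 3 * (‖jH w‖ * ‖w‖)) ^ 2 := by
            rw [hT]; refine pow_le_pow_left₀ (sq_nonneg _) (hsq.trans ?_) 2; gcongr; linarith
        _ = 4 * ((C_B * a₀) ^ 4 * κ ^ 4 * M ^ 2 * r ^ 4 * R) := by ring
        _ ≤ 64 * ((C_B * a₀) ^ 4 * κ ^ 4 * M ^ 2 * r ^ 4 * R) := by gcongr; norm_num
        _ = _ := by rw [hR_def]; field_simp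
    have : 0 ≤ ε * (s ^ 2 * ‖v‖ ^ 2) := by positivity
    have : 0 ≤ (C_B * a₀) ^ 4 * (κ ^ 2 / P) * (ε ^ 3)⁻¹ * (‖jH w‖ ^ 2 * ‖v‖ ^ 2) := by positivity
    linarith
  · have key : |c * B v v w| ≤ ε * ‖w‖ ^ 2 + ε * (s ^ 2 * ‖v‖ ^ 2) + ε * P * (r ^ 2 * ‖v‖ ^ 2)
        + (C_B * a₀) ^ 4 * (κ ^ 2 / P) * (ε ^ 3)⁻¹ * (‖jH w‖ ^ 2 * ‖v‖ ^ 2) := by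
      apply le_add_add_add_of_pow_four_le (by positivity) (by positivity) (by positivity)
        (by positivity)
      calc |c * B v v w| ^ 4
          ≤ ((C_B * a₀) ^ 2 * (2 * (κ * r * s)) * ‖v‖ ^ 3 * (‖jH w‖ * ‖w‖)) ^ 2 := by
            rw [hT]; refine pow_le_pow_left₀ (sq_nonneg _) (hsq.trans ?_) 2; gcongr; linarith
        _ = 4 * ((C_B * a₀) ^ 4 * κ ^ 2 * r ^ 2 * s ^ 2 * R) := by ring
        _ ≤ 256 * ((C_B * a₀) ^ 4 * κ ^ 2 * r ^ 2 * s ^ 2 * R) := by gcongr; norm_num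
        _ = _ := by rw [hR_def]; field_simp
    have : 0 ≤ (C_B * a₀) ^ 4 * (κ ^ 4 * M ^ 2 / P ^ 2) * (ε ^ 3)⁻¹
        * (‖jH w‖ ^ 2 * ‖v‖ ^ 2) := by
      positivity
    linarith

lemma mul_apply_sub_mul_apply_eq (hskew : ∀ u₁ u₂ u₃ : V, B u₁ u₂ u₃ = -B u₁ u₃ u₂)
    (pa pb : ℝ) (va vb vc : V) :
    pb * B vb vc (vc - vb) - pa * B va vb (vc - vb)
      = pa * B (vb - va) vb (vc - vb) + (pb - pa) * B vb vb (vc - vb) := by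
  have hvc : B vb vc (vc - vb) = B vb vb (vc - vb) := by
    have hsplit : B vb vc (vc - vb) = B vb vb (vc - vb) + B vb (vc - vb) (vc - vb) := by
      rw [← add_apply, ← map_add, add_sub_cancel]
    linarith [hskew vb (vc - vb) (vc - vb)]
  simp only [hvc, map_sub, sub_apply]
  ring

lemma cutoff_convective_sub_le_young (hQ : ∀ v : V, ‖jQ v‖ ^ 2 ≤ a₀ * ‖jH v‖ * ‖v‖)
    (hB : ∀ u v w : V, |B u v w| ≤ C_B * ‖jQ u‖ * ‖v‖ * ‖jQ w‖)
    (hskew : ∀ u₁ u₂ u₃ : V, B u₁ u₂ u₃ = -B u₁ u₃ u₂) {φ g : ℝ → ℝ} {m : ℕ} {L κ : ℝ}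
    (hφ : ∀ x, 0 ≤ x → φ x ∈ Icc (0:ℝ) 1) (hφ_zero : ∀ x, (m:ℝ) + 1 ≤ x → φ x = 0)
    (hL : 0 ≤ L) (hφ_lip : ∀ x y, 0 ≤ x → 0 ≤ y → |φ x - φ y| ≤ L * |x - y|)
    (hg : ∀ x, 0 ≤ x → g x ∈ Icc (0:ℝ) 1) (hκ : 0 ≤ κ)
    (hg_lip : ∀ x y, 0 ≤ x → 0 ≤ y → |g x - g y| ≤ κ * |x - y|)
    {ε P ξa ξb E : ℝ} (hε : 0 < ε) (hP : 0 < P) (hξa : 0 ≤ ξa) (hξb : 0 ≤ ξb)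
    (hE : |ξb - ξa| ≤ E) (va vb vc : V) :
    φ ‖jH vb‖ * g ξb * B vb vc (vc - vb) - φ ‖jH va‖ * g ξa * B va vb (vc - vb)
      ≤ 3 * ε * ‖vc - vb‖ ^ 2 + ε * ‖vb - va‖ ^ 2 + 3 * ε * (‖jH (vb - va)‖ ^ 2 * ‖vb‖ ^ 2)
        + ε * P * (E ^ 2 * ‖vb‖ ^ 2)
        + (C_B * a₀) ^ 4 * (1 + (L ^ 2 + L ^ 4) * (1 + ((m:ℝ) + 2) ^ 2)
            + κ ^ 4 * ((m:ℝ) + 2) ^ 2 / P ^ 2 + κ ^ 2 / P) * (ε ^ 3)⁻¹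
          * (‖jH (vc - vb)‖ ^ 2 * ‖vb‖ ^ 2) := by
  obtain ⟨hφa0, hφa1⟩ := hφ _ (norm_nonneg (jH va))
  obtain ⟨hφb0, hφb1⟩ := hφ _ (norm_nonneg (jH vb))
  obtain ⟨hga0, hga1⟩ := hg _ hξa
  obtain ⟨hgb0, hgb1⟩ := hg _ hξb
  have hM : (0:ℝ) ≤ (m:ℝ) + 2 := by positivity
  have hH : |‖jH vb‖ - ‖jH va‖| ≤ ‖jH (vb - va)‖ := by
    rw [map_sub]; exact abs_norm_sub_norm_le _ _
  have hsupp : ∀ x, φ x ≠ 0 → x < (m:ℝ) + 1 := fun x hx => by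
    by_contra! h; exact hx (hφ_zero x h)
  have hvb : φ ‖jH va‖ ≠ 0 ∨ φ ‖jH vb‖ ≠ 0 → ‖jH vb‖ ≤ (m:ℝ) + 2 + ‖jH (vb - va)‖
    | .inl h => by linarith [hsupp _ h, (abs_le.mp hH).2]
    | .inr h => by linarith [hsupp _ h, norm_nonneg (jH (vb - va))]
  have hΔφ : |(φ ‖jH vb‖ - φ ‖jH va‖) * g ξb| ≤ L * ‖jH (vb - va)‖ := by
    rw [abs_mul, abs_of_nonneg hgb0]
    exact (mul_le_of_le_one_right (abs_nonneg _) hgb1).trans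
      ((hφ_lip _ _ (norm_nonneg _) (norm_nonneg _)).trans (mul_le_mul_of_nonneg_left hH hL))
  have hΔg : |φ ‖jH va‖ * (g ξb - g ξa)| ≤ κ * E := by
    rw [abs_mul, abs_of_nonneg hφa0]
    exact (mul_le_of_le_one_left (abs_nonneg _) hφa1).trans
      ((hg_lip _ _ hξb hξa).trans (mul_le_mul_of_nonneg_left hE hκ))
  have h1 := abs_apply_le_young hQ hB hε (vb - va) vb (vc - vb)
  have h2 := abs_mul_apply_self_le_young_of_abs_le_mul_slack hQ hB hε
    (by rw [abs_mul, abs_of_nonneg hgb0]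
        exact mul_le_one₀ (abs_sub_le_iff.mpr ⟨by linarith, by linarith⟩) hgb0 hgb1)
    hΔφ (fun h => hvb (by by_contra! h'; simp [h'.1, h'.2] at h)) hM (norm_nonneg _) (vc - vb)
  have h3 := abs_mul_apply_self_le_young_of_abs_le_mul hQ hB hε hP
    (by rw [abs_mul, abs_of_nonneg hφa0]
        exact mul_le_one₀ hφa1 (abs_nonneg _) (abs_sub_le_iff.mpr ⟨by linarith, by linarith⟩))
    hΔg (fun h => hvb (.inl (left_ne_zero_of_mul h))) hM (norm_nonneg _) (vc - vb)
  have h1' : φ ‖jH va‖ * g ξa * B (vb - va) vb (vc - vb) ≤ |B (vb - va) vb (vc - vb)| := by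
    refine (le_abs_self _).trans ?_
    rw [abs_mul, abs_of_nonneg (mul_nonneg hφa0 hga0)]
    exact mul_le_of_le_one_left (abs_nonneg _) (mul_le_one₀ hφa1 hga0 hga1)
  rw [mul_apply_sub_mul_apply_eq hskew,
    show φ ‖jH vb‖ * g ξb - φ ‖jH va‖ * g ξa
      = (φ ‖jH vb‖ - φ ‖jH va‖) * g ξb + φ ‖jH va‖ * (g ξb - g ξa) by ring, add_mul]
  have := le_abs_self ((φ ‖jH vb‖ - φ ‖jH va‖) * g ξb * B vb vb (vc - vb))
  have := le_abs_self (φ ‖jH va‖ * (g ξb - g ξa) * B vb vb (vc - vb))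
  linarith

lemma cutoff_convective_sub_le (hQ : ∀ v : V, ‖jQ v‖ ^ 2 ≤ a₀ * ‖jH v‖ * ‖v‖)
    (hB : ∀ u v w : V, |B u v w| ≤ C_B * ‖jQ u‖ * ‖v‖ * ‖jQ w‖)
    (hskew : ∀ u₁ u₂ u₃ : V, B u₁ u₂ u₃ = -B u₁ u₃ u₂) {φ g : ℝ → ℝ} {m : ℕ} {L K δ : ℝ}
    (hδ : 0 < δ) (hφ : ∀ x, 0 ≤ x → φ x ∈ Icc (0:ℝ) 1)
    (hφ_zero : ∀ x, (m:ℝ) + 1 ≤ x → φ x = 0) (hL : 0 ≤ L)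
    (hφ_lip : ∀ x y, 0 ≤ x → 0 ≤ y → |φ x - φ y| ≤ L * |x - y|)
    (hg : ∀ x, 0 ≤ x → g x ∈ Icc (0:ℝ) 1) (hK : 0 ≤ K / δ)
    (hg_lip : ∀ x y, 0 ≤ x → 0 ≤ y → |g x - g y| ≤ K / δ * |x - y|)
    {ε ξa ξb I X : ℝ} (hε : 0 < ε) (hξa : 0 ≤ ξa) (hξb : 0 ≤ ξb) (hI : 0 ≤ I)
    (hξ : |ξb - ξa| ≤ √I) (va vb vc : V) (hX : ‖vb‖ ^ 2 ≤ X) :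
    φ ‖jH vb‖ * g ξb * B vb vc (vc - vb) - φ ‖jH va‖ * g ξa * B va vb (vc - vb)
      ≤ 5 * ε * ‖vc - vb‖ ^ 2 + 2 * ε * ‖vb - va‖ ^ 2
        + (1 + (C_B * a₀) ^ 4 * (1 + L ^ 2 + L ^ 4 + K ^ 2 + K ^ 4)) * ε * δ ^ (-(3:ℝ) / 2)
          * ‖vb‖ ^ 2 * I
        + 3 * ε * ‖jH (vb - va)‖ ^ 2 * X
        + (1 + (C_B * a₀) ^ 4 * (1 + L ^ 2 + L ^ 4 + K ^ 2 + K ^ 4)) * (ε ^ 3)⁻¹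
          * (1 + ((m:ℝ) + 2) ^ 2 + δ⁻¹ * ((m:ℝ) + 2) ^ 2) * ‖jH (vc - vb)‖ ^ 2 * X := by
  have hP := Real.rpow_pos_of_pos hδ (-(3:ℝ) / 2)
  have key := cutoff_convective_sub_le_young hQ hB hskew hφ hφ_zero hL hφ_lip hg hK hg_lip hε
    hP hξa hξb hξ va vb vc
  rw [Real.sq_sqrt hI] at key
  refine key.trans ?_
  have hconst := cutoff_constant_le (K := K) (L := L) hδ (M := (m:ℝ) + 2)
    (by linarith [m.cast_nonneg (α := ℝ)])
  have hX0 : 0 ≤ X := (sq_nonneg _).trans hX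
  have hW : (C_B * a₀) ^ 4 * (1 + (L ^ 2 + L ^ 4) * (1 + ((m:ℝ) + 2) ^ 2)
        + (K / δ) ^ 4 * ((m:ℝ) + 2) ^ 2 / (δ ^ (-(3:ℝ) / 2)) ^ 2
        + (K / δ) ^ 2 / δ ^ (-(3:ℝ) / 2)) * (ε ^ 3)⁻¹ * (‖jH (vc - vb)‖ ^ 2 * ‖vb‖ ^ 2)
      ≤ (1 + (C_B * a₀) ^ 4 * (1 + L ^ 2 + L ^ 4 + K ^ 2 + K ^ 4)) * (ε ^ 3)⁻¹
        * (1 + ((m:ℝ) + 2) ^ 2 + δ⁻¹ * ((m:ℝ) + 2) ^ 2) * ‖jH (vc - vb)‖ ^ 2 * X :=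
    calc _ ≤ (C_B * a₀) ^ 4 * ((1 + L ^ 2 + L ^ 4 + K ^ 2 + K ^ 4)
            * (1 + ((m:ℝ) + 2) ^ 2 + δ⁻¹ * ((m:ℝ) + 2) ^ 2))
            * (ε ^ 3)⁻¹ * (‖jH (vc - vb)‖ ^ 2 * X) := by gcongr
      _ = (C_B * a₀) ^ 4 * (1 + L ^ 2 + L ^ 4 + K ^ 2 + K ^ 4) * (ε ^ 3)⁻¹
            * (1 + ((m:ℝ) + 2) ^ 2 + δ⁻¹ * ((m:ℝ) + 2) ^ 2) * ‖jH (vc - vb)‖ ^ 2 * X := by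
          ring
      _ ≤ _ := by gcongr; linarith
  have hD := mul_le_mul_of_nonneg_left hX (by positivity : 0 ≤ 3 * ε * ‖jH (vb - va)‖ ^ 2)
  have hξ_term : 0 ≤ (C_B * a₀) ^ 4 * (1 + L ^ 2 + L ^ 4 + K ^ 2 + K ^ 4)
      * (ε * δ ^ (-(3:ℝ) / 2) * ‖vb‖ ^ 2 * I) := by
    positivity
  have hw : 0 ≤ ε * ‖vc - vb‖ ^ 2 := by positivity
  have hd : 0 ≤ ε * ‖vb - va‖ ^ 2 := by positivity
  linarith

end Trilinear

theorem stmt10_general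
    {H V Q : Type*}
    [NormedAddCommGroup H] [InnerProductSpace ℝ H]
    [NormedAddCommGroup V] [InnerProductSpace ℝ V]
    [NormedAddCommGroup Q] [NormedSpace ℝ Q]
    (jH : V →L[ℝ] H)
    (jQ : V →L[ℝ] Q)
    (a₀ : ℝ)
    (hQnorm : ∀ v : V, ‖jQ v‖ ^ 2 ≤ a₀ * ‖jH v‖ * ‖v‖)
    (B : V →L[ℝ] V →L[ℝ] V →L[ℝ] ℝ)
    (hskew : ∀ u₁ u₂ u₃ : V, B u₁ u₂ u₃ = - B u₁ u₃ u₂)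
    (C_B : ℝ)
    (hB : ∀ u v w : V, |B u v w| ≤ C_B * ‖jQ u‖ * ‖v‖ * ‖jQ w‖)
    -- the cut-off functions φ_m and g_δ
    (m : ℕ) (δ : ℝ) (hδ : 0 < δ)
    (φ : ℝ → ℝ) (hφ_smooth : ContDiffOn ℝ 2 φ (Set.Ici 0))
    (hφ_map : ∀ x : ℝ, 0 ≤ x → φ x ∈ Set.Icc (0:ℝ) 1)
    (hφ_zero : ∀ x : ℝ, (m:ℝ) + 1 ≤ x → φ x = 0)
    (Lφ : ℝ) (hLφ : ∀ x : ℝ, 0 ≤ x → |deriv φ x| ≤ Lφ)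
    (g : ℝ → ℝ) (hg_smooth : ContDiffOn ℝ 2 g (Set.Ici 0))
    (hg_map : ∀ x : ℝ, 0 ≤ x → g x ∈ Set.Icc (0:ℝ) 1)
    (K : ℝ) (hgK : ∀ x : ℝ, 0 ≤ x → |deriv g x| ≤ K / δ)
    -- the processes y_{n-1} = ya, y_n = yb, y_{n+1} = yc
    (ya yb yc : ℝ → V)
    (hya : StronglyMeasurable ya) (hyb : StronglyMeasurable yb)
    (hya_int : ∀ t : ℝ, 0 < t → IntegrableOn (fun s => ‖ya s‖ ^ 2) (Set.Ioc 0 t))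
    (hyb_int : ∀ t : ℝ, 0 < t → IntegrableOn (fun s => ‖yb s‖ ^ 2) (Set.Ioc 0 t))
    -- the quantities I_n and Ξ_n
    (In Xi : ℝ → ℝ)
    (hIn : ∀ t : ℝ, In t =
      φ ‖jH (yb t)‖ * g (Real.sqrt (∫ s in Set.Ioc (0:ℝ) t, ‖yb s‖ ^ 2)) *
          B (yb t) (yc t) (yc t - yb t)
        - φ ‖jH (ya t)‖ * g (Real.sqrt (∫ s in Set.Ioc (0:ℝ) t, ‖ya s‖ ^ 2)) *
          B (ya t) (yb t) (yc t - yb t))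
    (hXi : ∀ t : ℝ, Xi t =
      ‖ya t‖ ^ 2 * Set.indicator (Set.Icc (0:ℝ) (3 * δ)) (fun _ => (1:ℝ))
          (Real.sqrt (∫ s in Set.Ioc (0:ℝ) t, ‖ya s‖ ^ 2))
        + ‖yb t‖ ^ 2 * Set.indicator (Set.Icc (0:ℝ) (3 * δ)) (fun _ => (1:ℝ))
          (Real.sqrt (∫ s in Set.Ioc (0:ℝ) t, ‖yb s‖ ^ 2))) :
    ∃ C : ℝ, 0 < C ∧ ∀ ε t : ℝ, 0 < ε → 0 < t →
      Real.sqrt (∫ s in Set.Ioc (0:ℝ) t, ‖yb s‖ ^ 2) ≤ 3 * δ →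
      Real.sqrt (∫ s in Set.Ioc (0:ℝ) t, ‖ya s‖ ^ 2) ≤ 3 * δ →
      In t ≤ 5 * ε * ‖yc t - yb t‖ ^ 2
        + 2 * ε * ‖yb t - ya t‖ ^ 2
        + C * ε * δ ^ (-(3:ℝ)/2) * ‖yb t‖ ^ 2 * (∫ s in Set.Ioc (0:ℝ) t, ‖yb s - ya s‖ ^ 2)
        + 3 * ε * ‖jH (yb t - ya t)‖ ^ 2 * Xi t
        + C * ε ^ (-(3:ℝ)) * (1 + ((m:ℝ) + 2) ^ 2 + δ⁻¹ * ((m:ℝ) + 2) ^ 2)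
            * ‖jH (yc t - yb t)‖ ^ 2 * Xi t := by
  have hφ_lip x y (hx : 0 ≤ x) (hy : 0 ≤ y) : |φ x - φ y| ≤ Lφ * |x - y| :=
    abs_sub_le_mul_of_abs_deriv_le (hφ_smooth.differentiableOn (by norm_num))
      (fun z hz => hLφ z hz.le) hx hy
  have hg_lip x y (hx : 0 ≤ x) (hy : 0 ≤ y) : |g x - g y| ≤ K / δ * |x - y| :=
    abs_sub_le_mul_of_abs_deriv_le (hg_smooth.differentiableOn (by norm_num))
      (fun z hz => hgK z hz.le) hx hy
  refine ⟨1 + (C_B * a₀) ^ 4 * (1 + Lφ ^ 2 + Lφ ^ 4 + K ^ 2 + K ^ 4), by positivity,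
    fun ε t hε ht hb ha => ?_⟩
  have hmemLp (y : ℝ → V) (hy : StronglyMeasurable y)
      (hint : ∀ t, 0 < t → IntegrableOn (fun s => ‖y s‖ ^ 2) (Set.Ioc 0 t) volume) :
      MemLp y 2 (volume.restrict (Set.Ioc 0 t)) :=
    (memLp_two_iff_integrable_sq_norm hy.aestronglyMeasurable).mpr (hint t ht)
  have hXi_ge : ‖yb t‖ ^ 2 ≤ Xi t := by
    rw [hXi t, indicator_of_mem (mem_Icc.mpr ⟨Real.sqrt_nonneg _, ha⟩),
      indicator_of_mem (mem_Icc.mpr ⟨Real.sqrt_nonneg _, hb⟩)]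
    nlinarith [sq_nonneg ‖ya t‖]
  rw [hIn t, Real.rpow_neg hε.le, Real.rpow_ofNat]
  exact cutoff_convective_sub_le hQnorm hB hskew hδ hφ_map hφ_zero
    ((abs_nonneg _).trans (hLφ 0 le_rfl)) hφ_lip hg_map ((abs_nonneg _).trans (hgK 0 le_rfl))
    hg_lip hε (Real.sqrt_nonneg _) (Real.sqrt_nonneg _) (integral_nonneg fun _ => sq_nonneg _)
    (abs_sqrt_integral_norm_sq_sub_le (hmemLp yb hyb hyb_int) (hmemLp ya hya hya_int))
    (ya t) (yb t) (yc t) hXi_ge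

/-- There exists a constant `C > 0`, depending only on `a₀`, `C_B`, `L_φ`
and `K`, such that for every `ε > 0` and every `t > 0` with `|y_n|_{ξ_t} ≤ 3δ` and
`|y_{n−1}|_{ξ_t} ≤ 3δ`:
`I_n(t) ≤ 5ε ‖y_{n+1}(t) − y_n(t)‖² + 2ε ‖y_n(t) − y_{n−1}(t)‖²
  + C ε δ^{-3/2} ‖y_n(t)‖² |y_n − y_{n−1}|_{ξ_t}² + 3ε |y_n(t) − y_{n−1}(t)|² Ξ_n(t)
  + C ε⁻³ (1 + (m+2)² + δ⁻¹(m+2)²) |y_{n+1}(t) − y_n(t)|² Ξ_n(t)`.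

Here `ya = y_{n−1}`, `yb = y_n`, `yc = y_{n+1}`, `I_n` and `Ξ_n` are given by the
defining hypotheses `hIn`, `hXi`, `|·| = ‖jH ·‖` is the `H`-norm, `‖·‖` the `V`-norm,
and `|y|_{ξ_t} = (∫_0^t ‖y(s)‖² ds)^{1/2}`. -/
theorem stmt10
    {H V Q : Type*}
    [NormedAddCommGroup H] [InnerProductSpace ℝ H] [TopologicalSpace.SeparableSpace H]
    [NormedAddCommGroup V] [InnerProductSpace ℝ V] [TopologicalSpace.SeparableSpace V]
    [NormedAddCommGroup Q] [NormedSpace ℝ Q]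
    (jH : V →L[ℝ] H) (hjH : Function.Injective jH)
    (jQ : V →L[ℝ] Q) (hjQ : Function.Injective jQ)
    (a₀ : ℝ) (ha₀ : 0 < a₀)
    (hQnorm : ∀ v : V, ‖jQ v‖ ^ 2 ≤ a₀ * ‖jH v‖ * ‖v‖)
    (B : V →L[ℝ] V →L[ℝ] V →L[ℝ] ℝ)
    (hskew : ∀ u₁ u₂ u₃ : V, B u₁ u₂ u₃ = - B u₁ u₃ u₂)
    (C_B : ℝ) (hC_B : 0 < C_B)
    (hB : ∀ u v w : V, |B u v w| ≤ C_B * ‖jQ u‖ * ‖v‖ * ‖jQ w‖)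
    -- the cut-off functions φ_m and g_δ
    (m : ℕ) (δ : ℝ) (hδ : 0 < δ)
    (φ : ℝ → ℝ) (hφ_smooth : ContDiffOn ℝ 2 φ (Set.Ici 0))
    (hφ_map : ∀ x : ℝ, 0 ≤ x → φ x ∈ Set.Icc (0:ℝ) 1)
    (hφ_one : ∀ x ∈ Set.Icc (0:ℝ) (m:ℝ), φ x = 1)
    (hφ_zero : ∀ x : ℝ, (m:ℝ) + 1 ≤ x → φ x = 0)
    (Lφ : ℝ) (hLφ : ∀ x : ℝ, 0 ≤ x → |deriv φ x| ≤ Lφ)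
    (g : ℝ → ℝ) (hg_smooth : ContDiffOn ℝ 2 g (Set.Ici 0))
    (hg_map : ∀ x : ℝ, 0 ≤ x → g x ∈ Set.Icc (0:ℝ) 1)
    (hg_one : ∀ x ∈ Set.Icc (0:ℝ) δ, g x = 1)
    (hg_zero : ∀ x : ℝ, 2 * δ ≤ x → g x = 0)
    (K : ℝ) (hK : 0 < K) (hgK : ∀ x : ℝ, 0 ≤ x → |deriv g x| ≤ K / δ)
    -- the processes y_{n-1} = ya, y_n = yb, y_{n+1} = yc
    (ya yb yc : ℝ → V)
    (hya : StronglyMeasurable ya) (hyb : StronglyMeasurable yb)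
    (hyc : StronglyMeasurable yc)
    (hya_int : ∀ t : ℝ, 0 < t → IntegrableOn (fun s => ‖ya s‖ ^ 2) (Set.Ioc 0 t))
    (hyb_int : ∀ t : ℝ, 0 < t → IntegrableOn (fun s => ‖yb s‖ ^ 2) (Set.Ioc 0 t))
    (hyc_int : ∀ t : ℝ, 0 < t → IntegrableOn (fun s => ‖yc s‖ ^ 2) (Set.Ioc 0 t))
    -- the quantities I_n and Ξ_n
    (In Xi : ℝ → ℝ)
    (hIn : ∀ t : ℝ, In t =
      φ ‖jH (yb t)‖ * g (Real.sqrt (∫ s in Set.Ioc (0:ℝ) t, ‖yb s‖ ^ 2)) *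
          B (yb t) (yc t) (yc t - yb t)
        - φ ‖jH (ya t)‖ * g (Real.sqrt (∫ s in Set.Ioc (0:ℝ) t, ‖ya s‖ ^ 2)) *
          B (ya t) (yb t) (yc t - yb t))
    (hXi : ∀ t : ℝ, Xi t =
      ‖ya t‖ ^ 2 * Set.indicator (Set.Icc (0:ℝ) (3 * δ)) (fun _ => (1:ℝ))
          (Real.sqrt (∫ s in Set.Ioc (0:ℝ) t, ‖ya s‖ ^ 2))
        + ‖yb t‖ ^ 2 * Set.indicator (Set.Icc (0:ℝ) (3 * δ)) (fun _ => (1:ℝ))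
          (Real.sqrt (∫ s in Set.Ioc (0:ℝ) t, ‖yb s‖ ^ 2))) :
    ∃ C : ℝ, 0 < C ∧ ∀ ε t : ℝ, 0 < ε → 0 < t →
      Real.sqrt (∫ s in Set.Ioc (0:ℝ) t, ‖yb s‖ ^ 2) ≤ 3 * δ →
      Real.sqrt (∫ s in Set.Ioc (0:ℝ) t, ‖ya s‖ ^ 2) ≤ 3 * δ →
      In t ≤ 5 * ε * ‖yc t - yb t‖ ^ 2
        + 2 * ε * ‖yb t - ya t‖ ^ 2
        + C * ε * δ ^ (-(3:ℝ)/2) * ‖yb t‖ ^ 2 * (∫ s in Set.Ioc (0:ℝ) t, ‖yb s - ya s‖ ^ 2)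
        + 3 * ε * ‖jH (yb t - ya t)‖ ^ 2 * Xi t
        + C * ε ^ (-(3:ℝ)) * (1 + ((m:ℝ) + 2) ^ 2 + δ⁻¹ * ((m:ℝ) + 2) ^ 2)
            * ‖jH (yc t - yb t)‖ ^ 2 * Xi t :=
  stmt10_general jH jQ a₀ hQnorm B hskew C_B hB m δ hδ φ hφ_smooth hφ_map hφ_zero Lφ hLφ g hg_smooth
    hg_map K hgK ya yb yc hya hyb hya_int hyb_int In Xi hIn hXi
end

section
/- Let T > 0, c > 0, let f : [0,T] → [0,∞) be measurable with ∫_0^t f(s) ds < ∞ for every t ∈ [0,T], and let g : [0,∞) → [0,1] be a function with g(x) = 0 for every x ≥ c. Then ∫_0^T f(t) · g((∫_0^t f(s) ds)^{1/2}) dt ≤ c². -/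
/-!
Let `F t = ∫_0^t f` and let `τ` be the time at which `F` reaches `c²` (or `τ = T`). For `t > τ`
we have `√(F t) ≥ c`, so the integrand vanishes; for `t ≤ τ` it is at most `f t`. Hence the
integral is at most `∫_0^τ f = F τ ≤ c²`.
-/

open MeasureTheory Set

section Primitive

variable {f : ℝ → ℝ} {a b : ℝ}

theorem setIntegral_Ioc_mono_right (hf_nonneg : ∀ t ∈ Ioc a b, 0 ≤ f t)
    (hf_int : IntegrableOn f (Ioc a b)) {s t : ℝ} (hst : s ≤ t) (htb : t ≤ b) :
    ∫ x in Ioc a s, f x ≤ ∫ x in Ioc a t, f x :=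
  setIntegral_mono_set (hf_int.mono_set (Ioc_subset_Ioc_right htb))
    ((ae_restrict_iff' measurableSet_Ioc).2
      (.of_forall fun x hx => hf_nonneg x ⟨hx.1, hx.2.trans htb⟩))
    (Ioc_subset_Ioc_right hst).eventuallyLE

theorem exists_primitive_crossing (hab : a ≤ b) (hf_nonneg : ∀ t ∈ Ioc a b, 0 ≤ f t)
    (hf_int : IntegrableOn f (Ioc a b)) {M : ℝ} (hM : 0 ≤ M) :
    ∃ τ ∈ Icc a b, ∫ x in Ioc a τ, f x ≤ M ∧ ∀ t ∈ Ioc τ b, M ≤ ∫ x in Ioc a t, f x := by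
  by_cases hb : ∫ x in Ioc a b, f x ≤ M
  · exact ⟨b, ⟨hab, le_rfl⟩, hb, fun t ht => absurd ht.2 (not_le.2 ht.1)⟩
  have hcont : ContinuousOn (fun t => ∫ x in Ioc a t, f x) (Icc a b) :=
    intervalIntegral.continuousOn_primitive ((integrableOn_Icc_iff_integrableOn_Ioc).2 hf_int)
  have hM_mem : M ∈ Icc (∫ x in Ioc a a, f x) (∫ x in Ioc a b, f x) := by
    simpa using ⟨hM, (not_le.1 hb).le⟩
  obtain ⟨τ, hτ, hFτ⟩ := intermediate_value_Icc hab hcont hM_mem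
  exact ⟨τ, hτ, hFτ.le, fun t ht =>
    hFτ ▸ setIntegral_Ioc_mono_right hf_nonneg hf_int ht.1.le ht.2⟩

theorem setIntegral_mul_comp_primitive_le (hab : a ≤ b) (hf_nonneg : ∀ t ∈ Ioc a b, 0 ≤ f t)
    (hf_int : IntegrableOn f (Ioc a b)) {M : ℝ} (hM : 0 ≤ M) {h : ℝ → ℝ}
    (h_le_one : ∀ y, 0 ≤ y → h y ≤ 1) (h_zero : ∀ y, M ≤ y → h y = 0) :
    ∫ t in Ioc a b, f t * h (∫ x in Ioc a t, f x) ≤ M := by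
  by_cases hI : IntegrableOn (fun t => f t * h (∫ x in Ioc a t, f x)) (Ioc a b)
  swap
  · rw [integral_undef hI]; exact hM
  obtain ⟨τ, hτ, hFτ, hF_ge⟩ := exists_primitive_crossing hab hf_nonneg hf_int hM
  calc ∫ t in Ioc a b, f t * h (∫ x in Ioc a t, f x)
      ≤ ∫ t in Ioc a b, (Iic τ).indicator f t := by
        refine setIntegral_mono_on hI (hf_int.indicator measurableSet_Iic) measurableSet_Ioc
          fun t ht => ?_
        by_cases htτ : t ≤ τ
        · have hF_nonneg : 0 ≤ ∫ x in Ioc a t, f x :=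
            setIntegral_nonneg_of_ae_restrict ((ae_restrict_iff' measurableSet_Ioc).2
              (.of_forall fun x hx => hf_nonneg x ⟨hx.1, hx.2.trans ht.2⟩))
          rw [indicator_of_mem (mem_Iic.2 htτ)]
          exact mul_le_of_le_one_right (hf_nonneg t ht) (h_le_one _ hF_nonneg)
        · rw [indicator_of_notMem (mt mem_Iic.1 htτ), h_zero _ (hF_ge t ⟨not_le.1 htτ, ht.2⟩),
            mul_zero]
    _ = ∫ t in Ioc a τ, f t := by
        rw [setIntegral_indicator measurableSet_Iic, Ioc_inter_Iic, min_eq_right hτ.2]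
    _ ≤ M := hFτ

end Primitive

theorem stmt11_general (T c : ℝ) (hT : 0 < T)
    (f : ℝ → ℝ)
    (hf_nonneg : ∀ t ∈ Set.Icc (0:ℝ) T, 0 ≤ f t)
    (hf_int : ∀ t ∈ Set.Icc (0:ℝ) T, IntegrableOn f (Set.Ioc 0 t))
    (g : ℝ → ℝ) (hg_map : ∀ x : ℝ, 0 ≤ x → g x ∈ Set.Icc (0:ℝ) 1)
    (hg_zero : ∀ x : ℝ, c ≤ x → g x = 0) :
    (∫ t in Set.Ioc (0:ℝ) T, f t * g (Real.sqrt (∫ s in Set.Ioc (0:ℝ) t, f s))) ≤ c ^ 2 :=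
  setIntegral_mul_comp_primitive_le (h := fun y => g (Real.sqrt y)) hT.le
    (fun t ht => hf_nonneg t (Ioc_subset_Icc_self ht)) (hf_int T ⟨hT.le, le_rfl⟩) (sq_nonneg c)
    (fun y _ => (hg_map _ (Real.sqrt_nonneg y)).2)
    (fun _ hy => hg_zero _ ((le_abs_self c).trans (Real.abs_le_sqrt hy)))

/-- Let `T > 0`, `c > 0`, let `f : [0,T] → [0,∞)` be measurable with
`∫_0^t f(s) ds < ∞` for every `t ∈ [0,T]`, and let `g : [0,∞) → [0,1]` be a function with
`g(x) = 0` for every `x ≥ c`. Then `∫_0^T f(t) · g((∫_0^t f(s) ds)^{1/2}) dt ≤ c²`. -/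
theorem stmt11 (T c : ℝ) (hT : 0 < T) (hc : 0 < c)
    (f : ℝ → ℝ) (hf_meas : Measurable f)
    (hf_nonneg : ∀ t ∈ Set.Icc (0:ℝ) T, 0 ≤ f t)
    (hf_int : ∀ t ∈ Set.Icc (0:ℝ) T, IntegrableOn f (Set.Ioc 0 t))
    (g : ℝ → ℝ) (hg_map : ∀ x : ℝ, 0 ≤ x → g x ∈ Set.Icc (0:ℝ) 1)
    (hg_zero : ∀ x : ℝ, c ≤ x → g x = 0) :
    (∫ t in Set.Ioc (0:ℝ) T, f t * g (Real.sqrt (∫ s in Set.Ioc (0:ℝ) t, f s))) ≤ c ^ 2 :=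
  stmt11_general T c hT f hf_nonneg hf_int g hg_map hg_zero
end

section
/- Let T > 0, m ∈ ℕ, δ > 0, let y₀, w : [0,T] → V be strongly measurable with ∫_0^T ‖y₀(s)‖² ds < ∞ and ∫_0^T ‖w(s)‖² ds < ∞, and let e ∈ V. Then ∫_0^T |⟨B(y₀(s), w(s)), e⟩| φ_m(|y₀(s)|) g_δ(|y₀|_{ξ_s}) ds ≤ C_B a₀ (2δ (m+1) |e| ‖e‖)^{1/2} T^{1/4} (∫_0^T ‖w(s)‖² ds)^{1/2}. -/
/-!
Two cutoffs make the integrand small. Where `φ_m(|y₀(s)|) ≠ 0` we have `|y₀(s)| ≤ m + 1`, so the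
interpolation inequality gives `|y₀(s)|_Q ≤ (a₀ (m+1) ‖y₀(s)‖)^{1/2}`; and `g_δ(|y₀|_{ξ_s}) ≠ 0` only
on the set `A` of times `s` with `∫_0^s ‖y₀‖² < 4δ²`. Since `s ↦ ∫_0^s ‖y₀‖²` is continuous and
monotone, `A` is an initial interval on which `∫_A ‖y₀‖² ≤ 4δ²`. The integrand is thus bounded by
`C_B a₀ ((m+1)|e|‖e‖)^{1/2} ‖y₀‖^{1/2} ‖w‖` on `A`, and Cauchy–Schwarz twice gives
`∫_A ‖y₀‖^{1/2} ‖w‖ ≤ (∫_A ‖y₀‖²)^{1/4} |A|^{1/4} (∫ ‖w‖²)^{1/2} ≤ (2δ)^{1/2} T^{1/4} (∫ ‖w‖²)^{1/2}`.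
-/

open MeasureTheory Set

section CauchySchwarz

variable {α : Type*} [MeasurableSpace α] {μ : Measure α}

theorem integral_mul_le_sqrt_mul_sqrt {f g : α → ℝ} (hf0 : 0 ≤ᵐ[μ] f) (hg0 : 0 ≤ᵐ[μ] g)
    (hf : MemLp f 2 μ) (hg : MemLp g 2 μ) :
    ∫ a, f a * g a ∂μ ≤ √(∫ a, f a ^ 2 ∂μ) * √(∫ a, g a ^ 2 ∂μ) := by
  have := integral_mul_le_Lp_mul_Lq_of_nonneg Real.HolderConjugate.two_two hf0 hg0
    (by rwa [ENNReal.ofReal_ofNat]) (by rwa [ENNReal.ofReal_ofNat])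
  simpa only [Real.rpow_two, Real.sqrt_eq_rpow] using this

theorem memLp_two_sqrt {u : α → ℝ} (hu0 : 0 ≤ᵐ[μ] u) (hu : Integrable u μ) :
    MemLp (fun a => √(u a)) 2 μ := by
  refine (memLp_two_iff_integrable_sq
    (Real.continuous_sqrt.comp_aestronglyMeasurable hu.aestronglyMeasurable)).2 ?_
  refine hu.congr ?_
  filter_upwards [hu0] with a ha
  exact (Real.sq_sqrt ha).symm

theorem integrable_sqrt_mul [IsFiniteMeasure μ] {u v : α → ℝ} (hu0 : 0 ≤ᵐ[μ] u)
    (hu : MemLp u 2 μ) (hv : MemLp v 2 μ) : Integrable (fun a => √(u a) * v a) μ :=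
  (memLp_two_sqrt hu0 (hu.integrable one_le_two)).integrable_mul hv

theorem integral_sqrt_mul_le [IsFiniteMeasure μ] {u v : α → ℝ} (hu0 : 0 ≤ᵐ[μ] u)
    (hv0 : 0 ≤ᵐ[μ] v) (hu : MemLp u 2 μ) (hv : MemLp v 2 μ) :
    ∫ a, √(u a) * v a ∂μ ≤
      (∫ a, u a ^ 2 ∂μ) ^ ((1:ℝ)/4) * μ.real univ ^ ((1:ℝ)/4) * (∫ a, v a ^ 2 ∂μ) ^ ((1:ℝ)/2) := by
  have hsqrt_sq : ∫ a, √(u a) ^ 2 ∂μ = ∫ a, u a ∂μ := by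
    refine integral_congr_ae ?_
    filter_upwards [hu0] with a ha
    exact Real.sq_sqrt ha
  have h_u : ∫ a, u a ∂μ ≤ √(∫ a, u a ^ 2 ∂μ) * √(μ.real univ) := by
    simpa using integral_mul_le_sqrt_mul_sqrt hu0 (ae_of_all _ fun _ => zero_le_one) hu
      (memLp_const (1:ℝ))
  have hU : 0 ≤ ∫ a, u a ^ 2 ∂μ := integral_nonneg fun a => sq_nonneg (u a)
  calc ∫ a, √(u a) * v a ∂μ ≤ √(∫ a, √(u a) ^ 2 ∂μ) * √(∫ a, v a ^ 2 ∂μ) :=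
        integral_mul_le_sqrt_mul_sqrt (ae_of_all _ fun a => Real.sqrt_nonneg (u a)) hv0
          (memLp_two_sqrt hu0 (hu.integrable one_le_two)) hv
    _ ≤ √(√(∫ a, u a ^ 2 ∂μ) * √(μ.real univ)) * √(∫ a, v a ^ 2 ∂μ) := by
        rw [hsqrt_sq]
        gcongr
    _ = _ := by
        simp only [Real.sqrt_eq_rpow]
        rw [Real.mul_rpow (by positivity) (by positivity), ← Real.rpow_mul hU,
          ← Real.rpow_mul measureReal_nonneg]
        norm_num

end CauchySchwarz

section PrimitiveSublevelSet

def primitiveSublevelSet (f : ℝ → ℝ) (a b c : ℝ) : Set ℝ :=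
  {s ∈ Ioc a b | ∫ l in Ioc a s, f l < c}

variable {f : ℝ → ℝ} {a b c : ℝ}

theorem primitiveSublevelSet_subset_Ioc : primitiveSublevelSet f a b c ⊆ Ioc a b :=
  sep_subset _ _

theorem ordConnected_primitiveSublevelSet (hf0 : 0 ≤ f) (hf : IntegrableOn f (Ioc a b)) :
    OrdConnected (primitiveSublevelSet f a b c) := by
  refine ⟨fun x hx y hy z hz => ⟨⟨hx.1.1.trans_le hz.1, hz.2.trans hy.1.2⟩, ?_⟩⟩
  refine lt_of_le_of_lt ?_ hy.2
  exact setIntegral_mono_set (hf.mono_set (Ioc_subset_Ioc_right hy.1.2))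
    (ae_of_all _ fun l => hf0 l) (Ioc_subset_Ioc_right hz.2).eventuallyLE

theorem setIntegral_primitiveSublevelSet_le (hf0 : 0 ≤ f) (hf : IntegrableOn f (Ioc a b))
    (hc : 0 ≤ c) : ∫ s in primitiveSublevelSet f a b c, f s ≤ c := by
  set A := primitiveSublevelSet f a b c
  rcases A.eq_empty_or_nonempty with hA | hA
  · simpa [hA] using hc
  have hbdd : BddAbove A := bddAbove_Ioc.mono primitiveSublevelSet_subset_Ioc
  have hsup : sSup A ∈ Icc a b := by
    obtain ⟨x, hx⟩ := hA
    exact ⟨hx.1.1.le.trans (le_csSup hbdd hx), csSup_le ⟨x, hx⟩ fun y hy => hy.1.2⟩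
  -- By continuity of the primitive, `∫_a^s f < c` on `A` passes to `∫_a^(sSup A) f ≤ c`.
  have hclosed : IsClosed (Icc a b ∩ (fun x => ∫ l in Ioc a x, f l) ⁻¹' Iic c) :=
    (intervalIntegral.continuousOn_primitive
      ((integrableOn_Icc_iff_integrableOn_Ioc enorm_ne_top).2 hf)).preimage_isClosed_of_isClosed
      isClosed_Icc isClosed_Iic
  have hA_sub : A ⊆ Icc a b ∩ (fun x => ∫ l in Ioc a x, f l) ⁻¹' Iic c :=
    fun x hx => ⟨Ioc_subset_Icc_self hx.1, hx.2.le⟩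
  calc ∫ s in A, f s ≤ ∫ s in Ioc a (sSup A), f s :=
        setIntegral_mono_set (hf.mono_set (Ioc_subset_Ioc_right hsup.2))
          (ae_of_all _ fun l => hf0 l)
          (show A ⊆ Ioc a (sSup A) from fun x hx => ⟨hx.1.1, le_csSup hbdd hx⟩).eventuallyLE
    _ ≤ c := (hclosed.closure_subset_iff.2 hA_sub (csSup_mem_closure hA hbdd)).2

theorem setIntegral_primitiveSublevelSet_sqrt_mul_le {u v : ℝ → ℝ} (hab : a ≤ b) (hc : 0 ≤ c)
    (hu0 : 0 ≤ u) (hv0 : 0 ≤ v) (hu : MemLp u 2 (volume.restrict (Ioc a b)))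
    (hv : MemLp v 2 (volume.restrict (Ioc a b))) :
    ∫ s in primitiveSublevelSet (fun l => u l ^ 2) a b (c ^ 2), √(u s) * v s ≤
      c ^ ((1:ℝ)/2) * (b - a) ^ ((1:ℝ)/4) * (∫ s in Ioc a b, v s ^ 2) ^ ((1:ℝ)/2) := by
  set A := primitiveSublevelSet (fun l => u l ^ 2) a b (c ^ 2)
  have hA : A ⊆ Ioc a b := primitiveSublevelSet_subset_Ioc
  have hle : volume.restrict A ≤ volume.restrict (Ioc a b) := Measure.restrict_mono hA le_rfl
  have : IsFiniteMeasure (volume.restrict A) := isFiniteMeasure_of_le _ hle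
  calc ∫ s in A, √(u s) * v s
      ≤ (∫ s in A, u s ^ 2) ^ ((1:ℝ)/4) * volume.real A ^ ((1:ℝ)/4) *
          (∫ s in A, v s ^ 2) ^ ((1:ℝ)/2) := by
        simpa only [measureReal_restrict_apply_univ] using integral_sqrt_mul_le
          (ae_of_all _ hu0) (ae_of_all _ hv0) (hu.mono_measure hle) (hv.mono_measure hle)
    _ ≤ (c ^ 2) ^ ((1:ℝ)/4) * (b - a) ^ ((1:ℝ)/4) * (∫ s in Ioc a b, v s ^ 2) ^ ((1:ℝ)/2) := by
        gcongr
        · exact setIntegral_primitiveSublevelSet_le (fun s => sq_nonneg (u s))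
            ((memLp_two_iff_integrable_sq hu.1).1 hu) (sq_nonneg c)
        · simpa [hab] using measureReal_mono hA (measure_Ioc_lt_top (μ := volume)).ne
        · exact ae_of_all _ fun s => sq_nonneg (v s)
        · exact (memLp_two_iff_integrable_sq hv.1).1 hv
    _ = c ^ ((1:ℝ)/2) * (b - a) ^ ((1:ℝ)/4) * (∫ s in Ioc a b, v s ^ 2) ^ ((1:ℝ)/2) := by
        rw [← Real.rpow_natCast, ← Real.rpow_mul hc]
        norm_num

end PrimitiveSublevelSet

section Interpolation

variable {V H Q : Type*} [NormedAddCommGroup V] [NormedAddCommGroup H] [NormedAddCommGroup Q]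
  {jH : V → H} {jQ : V → Q} {a₀ : ℝ} {φ : ℝ → ℝ} {R : ℝ}

theorem norm_mul_cutoff_le_sqrt (ha₀ : 0 ≤ a₀) (hQnorm : ∀ v, ‖jQ v‖ ^ 2 ≤ a₀ * ‖jH v‖ * ‖v‖)
    (hφ_map : ∀ x, 0 ≤ x → φ x ∈ Icc 0 1) (hφ_zero : ∀ x, R ≤ x → φ x = 0) (v : V) :
    ‖jQ v‖ * φ ‖jH v‖ ≤ √(a₀ * R * ‖v‖) := by
  rcases lt_or_ge ‖jH v‖ R with hlt | hge
  · calc ‖jQ v‖ * φ ‖jH v‖ ≤ ‖jQ v‖ :=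
          mul_le_of_le_one_right (norm_nonneg _) (hφ_map _ (norm_nonneg _)).2
      _ ≤ √(a₀ * R * ‖v‖) := Real.le_sqrt_of_sq_le ((hQnorm v).trans (by gcongr))
  · rw [hφ_zero _ hge, mul_zero]
    positivity

theorem abs_mul_cutoff_le (ha₀ : 0 ≤ a₀) (hQnorm : ∀ v, ‖jQ v‖ ^ 2 ≤ a₀ * ‖jH v‖ * ‖v‖)
    {B : V → V → V → ℝ} {C_B : ℝ} (hC_B : 0 ≤ C_B)
    (hB : ∀ u v w, |B u v w| ≤ C_B * ‖jQ u‖ * ‖v‖ * ‖jQ w‖)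
    (hφ_map : ∀ x, 0 ≤ x → φ x ∈ Icc 0 1) (hφ_zero : ∀ x, R ≤ x → φ x = 0) (u v e : V) :
    |B u v e| * φ ‖jH u‖ ≤ C_B * a₀ * √(R * (‖jH e‖ * ‖e‖)) * (√‖u‖ * ‖v‖) := by
  have hφ0 := (hφ_map _ (norm_nonneg (jH u))).1
  calc |B u v e| * φ ‖jH u‖ ≤ C_B * ‖jQ u‖ * ‖v‖ * ‖jQ e‖ * φ ‖jH u‖ := by gcongr; exact hB u v e
    _ = C_B * ‖v‖ * (‖jQ u‖ * φ ‖jH u‖) * ‖jQ e‖ := by ring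
    _ ≤ C_B * ‖v‖ * √(a₀ * R * ‖u‖) * √(a₀ * ‖jH e‖ * ‖e‖) := by
        gcongr
        · exact norm_mul_cutoff_le_sqrt ha₀ hQnorm hφ_map hφ_zero u
        · exact Real.le_sqrt_of_sq_le (hQnorm e)
    _ = C_B * a₀ * √(R * (‖jH e‖ * ‖e‖)) * (√‖u‖ * ‖v‖) := by
        rw [mul_assoc _ √(a₀ * R * ‖u‖), ← Real.sqrt_mul' _ (by positivity),
          show a₀ * R * ‖u‖ * (a₀ * ‖jH e‖ * ‖e‖) = a₀ ^ 2 * (R * (‖jH e‖ * ‖e‖)) * ‖u‖ by ring,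
          Real.sqrt_mul' _ (norm_nonneg u), Real.sqrt_mul (sq_nonneg a₀), Real.sqrt_sq ha₀]
        ring

theorem abs_mul_cutoff_mul_cutoff_le_indicator (ha₀ : 0 ≤ a₀)
    (hQnorm : ∀ v, ‖jQ v‖ ^ 2 ≤ a₀ * ‖jH v‖ * ‖v‖) {B : V → V → V → ℝ} {C_B : ℝ} (hC_B : 0 ≤ C_B)
    (hB : ∀ u v w, |B u v w| ≤ C_B * ‖jQ u‖ * ‖v‖ * ‖jQ w‖)
    (hφ_map : ∀ x, 0 ≤ x → φ x ∈ Icc 0 1) (hφ_zero : ∀ x, R ≤ x → φ x = 0)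
    {g : ℝ → ℝ} {r : ℝ} (hg_map : ∀ x, 0 ≤ x → g x ∈ Icc 0 1) (hg_zero : ∀ x, r ≤ x → g x = 0)
    (y w : ℝ → V) (e : V) {a b s : ℝ} (hs : s ∈ Ioc a b) :
    |B (y s) (w s) e| * φ ‖jH (y s)‖ * g √(∫ l in Ioc a s, ‖y l‖ ^ 2) ≤
      (primitiveSublevelSet (fun l => ‖y l‖ ^ 2) a b (r ^ 2)).indicator
        (fun s => C_B * a₀ * √(R * (‖jH e‖ * ‖e‖)) * (√‖y s‖ * ‖w s‖)) s := by
  by_cases hsA : s ∈ primitiveSublevelSet (fun l => ‖y l‖ ^ 2) a b (r ^ 2)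
  · rw [indicator_of_mem hsA]
    exact (mul_le_of_le_one_right (mul_nonneg (abs_nonneg _) (hφ_map _ (norm_nonneg _)).1)
      (hg_map _ (Real.sqrt_nonneg _)).2).trans
      (abs_mul_cutoff_le ha₀ hQnorm hC_B hB hφ_map hφ_zero _ _ _)
  · have hr_le : r ≤ √(∫ l in Ioc a s, ‖y l‖ ^ 2) :=
      Real.le_sqrt_of_sq_le (not_lt.1 fun h => hsA ⟨hs, h⟩)
    rw [indicator_of_notMem hsA, hg_zero _ hr_le, mul_zero]

end Interpolation

theorem stmt13_general
    {H V Q : Type*}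
    [NormedAddCommGroup H] [InnerProductSpace ℝ H]
    [NormedAddCommGroup V] [InnerProductSpace ℝ V]
    [NormedAddCommGroup Q] [NormedSpace ℝ Q]
    (jH : V →L[ℝ] H)
    (jQ : V →L[ℝ] Q)
    (a₀ : ℝ) (ha₀ : 0 < a₀)
    (hQnorm : ∀ v : V, ‖jQ v‖ ^ 2 ≤ a₀ * ‖jH v‖ * ‖v‖)
    (B : V →L[ℝ] V →L[ℝ] V →L[ℝ] ℝ)
    (C_B : ℝ) (hC_B : 0 < C_B)
    (hB : ∀ u v w : V, |B u v w| ≤ C_B * ‖jQ u‖ * ‖v‖ * ‖jQ w‖)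
    (T : ℝ) (hT : 0 < T) (m : ℕ) (δ : ℝ) (hδ : 0 < δ)
    (φ : ℝ → ℝ)
    (hφ_map : ∀ x : ℝ, 0 ≤ x → φ x ∈ Set.Icc (0:ℝ) 1)
    (hφ_zero : ∀ x : ℝ, (m:ℝ) + 1 ≤ x → φ x = 0)
    (g : ℝ → ℝ)
    (hg_map : ∀ x : ℝ, 0 ≤ x → g x ∈ Set.Icc (0:ℝ) 1)
    (hg_zero : ∀ x : ℝ, 2 * δ ≤ x → g x = 0)
    (y₀ w : ℝ → V)
    (hy₀ : StronglyMeasurable y₀) (hw : StronglyMeasurable w)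
    (hy₀_int : IntegrableOn (fun s => ‖y₀ s‖ ^ 2) (Set.Ioc 0 T))
    (hw_int : IntegrableOn (fun s => ‖w s‖ ^ 2) (Set.Ioc 0 T))
    (e : V) :
    (∫ s in Set.Ioc (0:ℝ) T,
        |B (y₀ s) (w s) e| * φ ‖jH (y₀ s)‖ *
          g (Real.sqrt (∫ l in Set.Ioc (0:ℝ) s, ‖y₀ l‖ ^ 2)))
      ≤ C_B * a₀ * (2 * δ * ((m:ℝ) + 1) * ‖jH e‖ * ‖e‖) ^ ((1:ℝ)/2) * T ^ ((1:ℝ)/4) *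
        (∫ s in Set.Ioc (0:ℝ) T, ‖w s‖ ^ 2) ^ ((1:ℝ)/2) := by
  set A := primitiveSublevelSet (fun l => ‖y₀ l‖ ^ 2) 0 T ((2 * δ) ^ 2)
  have hA : MeasurableSet A :=
    (ordConnected_primitiveSublevelSet (fun _ => sq_nonneg _) hy₀_int).measurableSet
  have hy₀L2 : MemLp (fun s => ‖y₀ s‖) 2 (volume.restrict (Ioc 0 T)) :=
    (memLp_two_iff_integrable_sq hy₀.norm.aestronglyMeasurable).2 hy₀_int
  have hwL2 : MemLp (fun s => ‖w s‖) 2 (volume.restrict (Ioc 0 T)) :=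
    (memLp_two_iff_integrable_sq hw.norm.aestronglyMeasurable).2 hw_int
  set K := C_B * a₀ * √(((m:ℝ) + 1) * (‖jH e‖ * ‖e‖)) with hK
  calc _ ≤ ∫ s in Ioc 0 T, A.indicator (fun s => K * (√‖y₀ s‖ * ‖w s‖)) s := by
        refine integral_mono_of_nonneg (ae_of_all _ fun s => ?_)
          (((integrable_sqrt_mul (ae_of_all _ fun _ => norm_nonneg _) hy₀L2 hwL2).const_mul K
            ).indicator hA) ?_
        · exact mul_nonneg (mul_nonneg (abs_nonneg _) (hφ_map _ (norm_nonneg _)).1)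
            (hg_map _ (Real.sqrt_nonneg _)).1
        · filter_upwards [ae_restrict_mem measurableSet_Ioc] with s hs using
            abs_mul_cutoff_mul_cutoff_le_indicator ha₀.le hQnorm hC_B.le hB hφ_map hφ_zero hg_map
              hg_zero y₀ w e hs
    _ = K * ∫ s in A, √‖y₀ s‖ * ‖w s‖ := by
        rw [integral_indicator hA, Measure.restrict_restrict hA,
          inter_eq_left.2 primitiveSublevelSet_subset_Ioc, integral_const_mul]
    _ ≤ K * ((2 * δ) ^ ((1:ℝ)/2) * (T - 0) ^ ((1:ℝ)/4) *
          (∫ s in Ioc 0 T, ‖w s‖ ^ 2) ^ ((1:ℝ)/2)) := by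
        gcongr
        exact setIntegral_primitiveSublevelSet_sqrt_mul_le hT.le (by positivity)
          (fun _ => norm_nonneg _) (fun _ => norm_nonneg _) hy₀L2 hwL2
    _ = _ := by
        rw [sub_zero, hK, Real.sqrt_eq_rpow,
          show 2 * δ * ((m:ℝ) + 1) * ‖jH e‖ * ‖e‖ = 2 * δ * (((m:ℝ) + 1) * (‖jH e‖ * ‖e‖)) by ring,
          Real.mul_rpow (x := 2 * δ) (by positivity) (by positivity)]
        ring

/-- Let `T > 0`, `m ∈ ℕ`, `δ > 0`, let `y₀, w : [0,T] → V` be strongly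
measurable with `∫_0^T ‖y₀(s)‖² ds < ∞` and `∫_0^T ‖w(s)‖² ds < ∞`, and let `e ∈ V`. Then
`∫_0^T |⟨B(y₀(s), w(s)), e⟩| φ_m(|y₀(s)|) g_δ(|y₀|_{ξ_s}) ds
  ≤ C_B a₀ (2δ (m+1) |e| ‖e‖)^{1/2} T^{1/4} (∫_0^T ‖w(s)‖² ds)^{1/2}`,
where `|·| = ‖jH ·‖` is the `H`-norm, `‖·‖` the `V`-norm and
`|y₀|_{ξ_s} = (∫_0^s ‖y₀(l)‖² dl)^{1/2}`. -/
theorem stmt13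
    {H V Q : Type*}
    [NormedAddCommGroup H] [InnerProductSpace ℝ H] [TopologicalSpace.SeparableSpace H]
    [NormedAddCommGroup V] [InnerProductSpace ℝ V] [TopologicalSpace.SeparableSpace V]
    [NormedAddCommGroup Q] [NormedSpace ℝ Q]
    (jH : V →L[ℝ] H) (hjH : Function.Injective jH)
    (jQ : V →L[ℝ] Q) (hjQ : Function.Injective jQ)
    (a₀ : ℝ) (ha₀ : 0 < a₀)
    (hQnorm : ∀ v : V, ‖jQ v‖ ^ 2 ≤ a₀ * ‖jH v‖ * ‖v‖)
    (B : V →L[ℝ] V →L[ℝ] V →L[ℝ] ℝ)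
    (C_B : ℝ) (hC_B : 0 < C_B)
    (hB : ∀ u v w : V, |B u v w| ≤ C_B * ‖jQ u‖ * ‖v‖ * ‖jQ w‖)
    (T : ℝ) (hT : 0 < T) (m : ℕ) (δ : ℝ) (hδ : 0 < δ)
    (φ : ℝ → ℝ) (hφ_smooth : ContDiffOn ℝ 2 φ (Set.Ici 0))
    (hφ_map : ∀ x : ℝ, 0 ≤ x → φ x ∈ Set.Icc (0:ℝ) 1)
    (hφ_one : ∀ x ∈ Set.Icc (0:ℝ) (m:ℝ), φ x = 1)
    (hφ_zero : ∀ x : ℝ, (m:ℝ) + 1 ≤ x → φ x = 0)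
    (g : ℝ → ℝ) (hg_smooth : ContDiffOn ℝ 2 g (Set.Ici 0))
    (hg_map : ∀ x : ℝ, 0 ≤ x → g x ∈ Set.Icc (0:ℝ) 1)
    (hg_one : ∀ x ∈ Set.Icc (0:ℝ) δ, g x = 1)
    (hg_zero : ∀ x : ℝ, 2 * δ ≤ x → g x = 0)
    (y₀ w : ℝ → V)
    (hy₀ : StronglyMeasurable y₀) (hw : StronglyMeasurable w)
    (hy₀_int : IntegrableOn (fun s => ‖y₀ s‖ ^ 2) (Set.Ioc 0 T))
    (hw_int : IntegrableOn (fun s => ‖w s‖ ^ 2) (Set.Ioc 0 T))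
    (e : V) :
    (∫ s in Set.Ioc (0:ℝ) T,
        |B (y₀ s) (w s) e| * φ ‖jH (y₀ s)‖ *
          g (Real.sqrt (∫ l in Set.Ioc (0:ℝ) s, ‖y₀ l‖ ^ 2)))
      ≤ C_B * a₀ * (2 * δ * ((m:ℝ) + 1) * ‖jH e‖ * ‖e‖) ^ ((1:ℝ)/2) * T ^ ((1:ℝ)/4) *
        (∫ s in Set.Ioc (0:ℝ) T, ‖w s‖ ^ 2) ^ ((1:ℝ)/2) :=
  stmt13_general jH jQ a₀ ha₀ hQnorm B C_B hC_B hB T hT m δ hδ φ hφ_map hφ_zero g hg_map hg_zero y₀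
    w hy₀ hw hy₀_int hw_int e
end
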